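/- arXiv:1811.06108 — 3 statements merged into one kernel-verified Lean document; each statement's English description precedes it below -/
import Mathlib

section
/- Suppose the interpolative fusion T∪* exists, M∪ and N∪ are models of T∪*, and M_i is an elementary substructure of N_i for all i ∈ I. Then M∪ is an elementary substructure of N∪. -/
namespace InterpolativeFusion

open FirstOrder FirstOrder.Language Set

universe w

variable {ι : Type*} {M : Type*} {N : Type*}

/-! ### Wrappers for working with explicit structures -/

/-- Realization of a formula with respect to an explicitly given structure. -/
def RealizeWith (L0 : Language) (S : L0.Structure M) {α : Type*} (φ : L0.Formula α)
    (x : α → M) : Prop :=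
  letI := S
  φ.Realize x

/-- Definability (with arbitrary parameters) with respect to an explicitly given structure. -/
def DefinableWith (L0 : Language) (S : L0.Structure M) {n : ℕ} (s : Set (Fin n → M)) : Prop :=
  letI := S
  Set.Definable (Set.univ : Set M) L0 s

/-- `M` is a model of `T0`, with respect to an explicitly given structure. -/
def ModelsWith (L0 : Language) (S : L0.Structure M) (T0 : L0.Theory) : Prop :=
  letI := S
  M ⊨ T0

/-- `f : M → N` is an `L0`-embedding with respect to explicitly given structures. -/
def IsEmbeddingWith (L0 : Language) (SM : L0.Structure M) (SN : L0.Structure N)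
    (f : M → N) : Prop :=
  letI := SM
  letI := SN
  ∃ g : M ↪[L0] N, ⇑g = f

/-- `f : M → N` is an elementary map with respect to explicitly given structures. -/
def IsElementaryWith (L0 : Language) (SM : L0.Structure M) (SN : L0.Structure N)
    (f : M → N) : Prop :=
  ∀ (k : ℕ) (φ : L0.Formula (Fin k)) (a : Fin k → M),
    RealizeWith L0 SM φ a ↔ RealizeWith L0 SN φ (f ∘ a)

/-! ### The languages of an interpolative fusion setting

Each `L i` consists of the common base language `Lcap` together with new symbols `L' i`,
which are pairwise disjoint for distinct indices, so that `L i ∩ L j = Lcap` for `i ≠ j`. -/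

/-- The language of the new symbols of all the languages `L' i`, combined disjointly. -/
def sigmaLang (L' : ι → Language) : Language where
  Functions n := Σ i : ι, (L' i).Functions n
  Relations n := Σ i : ι, (L' i).Relations n

/-- `L∪`: the base language together with all of the new symbols. -/
def unionLang (Lcap : Language) (L' : ι → Language) : Language :=
  Lcap.sum (sigmaLang L')

/-- `L i`: the base language together with the new symbols of index `i`. -/
def langI (Lcap : Language) (L' : ι → Language) (i : ι) : Language :=
  Lcap.sum (L' i)

/-- The inclusion of the new symbols of index `i` into the combined new symbols. -/
def sigmaIncl (L' : ι → Language) (i : ι) : L' i →ᴸ sigmaLang L' where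
  onFunction := fun _ f => ⟨i, f⟩
  onRelation := fun _ r => ⟨i, r⟩

/-- The inclusion `Lcap →ᴸ L i`. -/
def inclCapI (Lcap : Language) (L' : ι → Language) (i : ι) : Lcap →ᴸ langI Lcap L' i :=
  LHom.sumInl

/-- The inclusion `L i →ᴸ L∪`. -/
def inclI (Lcap : Language) (L' : ι → Language) (i : ι) :
    langI Lcap L' i →ᴸ unionLang Lcap L' :=
  LHom.sumMap (LHom.id Lcap) (sigmaIncl L' i)

/-- The inclusion `Lcap →ᴸ L∪`. -/
def inclCap (Lcap : Language) (L' : ι → Language) : Lcap →ᴸ unionLang Lcap L' :=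
  LHom.sumInl

/-- The reduct of an `L∪`-structure to `L i`. -/
def structI (Lcap : Language) (L' : ι → Language) (i : ι)
    (Su : (unionLang Lcap L').Structure M) : (langI Lcap L' i).Structure M :=
  letI := Su
  (inclI Lcap L' i).reduct M

/-- The reduct of an `L∪`-structure to `Lcap`. -/
def structCap (Lcap : Language) (L' : ι → Language)
    (Su : (unionLang Lcap L').Structure M) : Lcap.Structure M :=
  letI := Su
  (inclCap Lcap L').reduct M

/-- The reduct of an `L i`-structure to `Lcap`. -/
def structCapOfI (Lcap : Language) (L' : ι → Language) (i : ι)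
    (S : (langI Lcap L' i).Structure M) : Lcap.Structure M :=
  letI := S
  (inclCapI Lcap L' i).reduct M

/-! ### Separation and interpolative structures -/

/-- A family of sets, indexed by a finite `J ⊆ ι`, is separated if each member can be enlarged to
an `M∩`-definable set in such a way that the enlarged sets have empty total intersection. -/
def Separated (Lcap : Language) (L' : ι → Language)
    (Su : (unionLang Lcap L').Structure M) {n : ℕ} (J : Finset ι)
    (X : ι → Set (Fin n → M)) : Prop :=
  ∃ Y : ι → Set (Fin n → M),
    (∀ i ∈ J, DefinableWith Lcap (structCap Lcap L' Su) (Y i) ∧ X i ⊆ Y i) ∧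
      (⋂ i ∈ J, Y i) = ∅

/-- An `L∪`-structure is interpolative if any finite family of sets, each definable in one of the
reducts `M i`, has nonempty intersection if and only if the family is not separated. -/
def Interpolative (Lcap : Language) (L' : ι → Language)
    (Su : (unionLang Lcap L').Structure M) : Prop :=
  ∀ (n : ℕ) (J : Finset ι) (X : ι → Set (Fin n → M)),
    (∀ i ∈ J, DefinableWith (langI Lcap L' i) (structI Lcap L' i Su) (X i)) →
      ((⋂ i ∈ J, X i).Nonempty ↔ ¬ Separated Lcap L' Su J X)

/-! ### Theories -/

/-- The union theory `T∪`. -/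
def unionTheory (Lcap : Language) (L' : ι → Language)
    (T : ∀ i : ι, (langI Lcap L' i).Theory) : (unionLang Lcap L').Theory :=
  ⋃ i : ι, (inclI Lcap L' i).onTheory (T i)

/-- All of the theories `T i` have the same set of `Lcap`-consequences. -/
def SameCapConsequences (Lcap : Language) (L' : ι → Language)
    (T : ∀ i : ι, (langI Lcap L' i).Theory) : Prop :=
  ∀ (i j : ι) (σ : Lcap.Sentence),
    (T i) ⊨ᵇ ((inclCapI Lcap L' i).onSentence σ) ↔ (T j) ⊨ᵇ ((inclCapI Lcap L' j).onSentence σ)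

/-- `Tstar` axiomatizes the class of interpolative models of the union theory, i.e. `Tstar` is
the interpolative fusion of the theories `T i`. -/
def AxiomatizesInterpolative (Lcap : Language) (L' : ι → Language)
    (T : ∀ i : ι, (langI Lcap L' i).Theory) (Tstar : (unionLang Lcap L').Theory) : Prop :=
  ∀ (M : Type w) (Su : (unionLang Lcap L').Structure M),
    ModelsWith (unionLang Lcap L') Su Tstar ↔
      (ModelsWith (unionLang Lcap L') Su (unionTheory Lcap L' T) ∧
        Interpolative Lcap L' Su)


end InterpolativeFusion

/-!
The proof is an induction on formulas, run simultaneously for all pairs of models of `T∪*`;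
only the universal quantifier needs an idea. If `f : A → B` is elementary in every reduct and
`A` is interpolative, then every finite set of `L i`-conditions satisfied in `B` pulls back
along `f` to `A`: otherwise the sets they define in `A` are separated by `L∩`-definable sets,
and this separation, being expressed in the reducts, transfers to `B` and contradicts the
solution there. By compactness (an ultrapower of `A`) this gives `g : B → P`, elementary in
every reduct, with `g ∘ f : A → P` the diagonal embedding and hence fully elementary. So `P` is
again a model of `T∪*`; if `A ⊨ ∀ y, ψ(a, y)` then `P ⊨ ψ(g (f a), g c)` for every `c ∈ B`,
and the induction hypothesis for `g` brings this back to `B`.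
-/

namespace InterpolativeFusion

open FirstOrder FirstOrder.Language Set

theorem _root_.FirstOrder.Language.BoundedFormula.realize_congr_of_eqOn_freeVarFinset
    {L : Language} {M α : Type*} [L.Structure M] [DecidableEq α] {n : ℕ}
    {φ : L.BoundedFormula α n} {v v' : α → M} (h : ∀ a ∈ φ.freeVarFinset, v a = v' a)
    (xs : Fin n → M) : φ.Realize v xs ↔ φ.Realize v' xs := by
  rw [← BoundedFormula.realize_restrictFreeVar (f := id) (v := v ∘ Subtype.val) v (fun _ => rfl),
    BoundedFormula.realize_restrictFreeVar (f := id) v' fun a => h a a.2]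

section Elementary

variable {L : Language} {M N : Type*} {SM : L.Structure M} {SN : L.Structure N} {f : M → N}

def IsElementaryWith.toElementaryEmbedding (hf : IsElementaryWith L SM SN f) :
    @ElementaryEmbedding L M N SM SN :=
  @ElementaryEmbedding.mk L M N SM SN f fun _ φ x => (hf _ φ x).symm

theorem IsElementaryWith.realize_boundedFormula (hf : IsElementaryWith L SM SN f) {α : Type*}
    {n : ℕ} (φ : L.BoundedFormula α n) (v : α → M) (xs : Fin n → M) :
    @BoundedFormula.Realize L M SM α n φ v xs ↔
      @BoundedFormula.Realize L N SN α n φ (f ∘ v) (f ∘ xs) :=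
  letI := SM; letI := SN; (hf.toElementaryEmbedding.map_boundedFormula φ v xs).symm

theorem IsElementaryWith.realize_formula (hf : IsElementaryWith L SM SN f) {α : Type*}
    (φ : L.Formula α) (v : α → M) :
    @Formula.Realize L M SM α φ v ↔ @Formula.Realize L N SN α φ (f ∘ v) :=
  letI := SM; letI := SN; (hf.toElementaryEmbedding.map_formula φ v).symm

theorem IsElementaryWith.injective (hf : IsElementaryWith L SM SN f) : Function.Injective f :=
  letI := SM; letI := SN; hf.toElementaryEmbedding.injective

theorem IsElementaryWith.nonempty (hf : IsElementaryWith L SM SN f) [Nonempty N] : Nonempty M :=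
  letI := SM; letI := SN; hf.toElementaryEmbedding.elementarilyEquivalent.nonempty_iff.2 ‹_›

theorem IsElementaryWith.modelsWith (hf : IsElementaryWith L SM SN f) {T : L.Theory}
    (hM : ModelsWith L SM T) : ModelsWith L SN T :=
  letI := SM; letI := SN; (hf.toElementaryEmbedding.theory_model_iff T).1 hM

end Elementary

section Definable

variable {L : Language} {M : Type*} (S : L.Structure M) {n : ℕ}

theorem definableWith_setOf_realize (φ : L.Formula ((univ : Set M) ⊕ Fin n)) :
    DefinableWith L S {x | @Formula.Realize L M S _ φ (Sum.elim (↑) x)} :=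
  letI := S; definable_iff_exists_formula_sum.2 ⟨φ, rfl⟩

theorem DefinableWith.exists_formula {s : Set (Fin n → M)} (hs : DefinableWith L S s) :
    ∃ φ : L.Formula ((univ : Set M) ⊕ Fin n),
      s = {x | @Formula.Realize L M S _ φ (Sum.elim (↑) x)} :=
  letI := S; definable_iff_exists_formula_sum.1 hs

end Definable

variable {ι : Type*} {Lcap : Language} {L' : ι → Language}

theorem exists_inclI_onFunction [Nonempty ι] {l : ℕ} (F : (unionLang Lcap L').Functions l) :
    ∃ (i : ι) (F' : (langI Lcap L' i).Functions l), (inclI Lcap L' i).onFunction F' = F := by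
  rcases F with F | ⟨i, F⟩
  · exact ⟨Classical.arbitrary ι, Sum.inl F, rfl⟩
  · exact ⟨i, Sum.inr F, rfl⟩

theorem exists_inclI_onRelation [Nonempty ι] {l : ℕ} (R : (unionLang Lcap L').Relations l) :
    ∃ (i : ι) (R' : (langI Lcap L' i).Relations l), (inclI Lcap L' i).onRelation R' = R := by
  rcases R with R | ⟨i, R⟩
  · exact ⟨Classical.arbitrary ι, Sum.inl R, rfl⟩
  · exact ⟨i, Sum.inr R, rfl⟩

theorem realize_inclCapI_onFormula {A : Type*} (SA : (unionLang Lcap L').Structure A) (i : ι)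
    {α : Type*} (ψ : Lcap.Formula α) (v : α → A) :
    @Formula.Realize _ A (structI Lcap L' i SA) α ((inclCapI Lcap L' i).onFormula ψ) v ↔
      @Formula.Realize Lcap A (structCap Lcap L' SA) α ψ v :=
  letI := structI Lcap L' i SA
  letI := structCap Lcap L' SA
  haveI : (inclCapI Lcap L' i).IsExpansionOn A := LHom.isExpansionOn_reduct _ A
  LHom.realize_onFormula _ ψ

section Reducts

universe u v

variable {A : Type u} {B : Type v} {SA : (unionLang Lcap L').Structure A}
  {SB : (unionLang Lcap L').Structure B} {f : A → B}

def IsReductElementary (SA : (unionLang Lcap L').Structure A)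
    (SB : (unionLang Lcap L').Structure B) (f : A → B) : Prop :=
  ∀ i, IsElementaryWith (langI Lcap L' i) (structI Lcap L' i SA) (structI Lcap L' i SB) f

variable [Nonempty ι]

theorem IsReductElementary.injective (hf : IsReductElementary SA SB f) : Function.Injective f :=
  (hf (Classical.arbitrary ι)).injective

theorem IsReductElementary.nonempty (hf : IsReductElementary SA SB f) [Nonempty B] :
    Nonempty A :=
  (hf (Classical.arbitrary ι)).nonempty

def IsReductElementary.toEmbedding (hf : IsReductElementary SA SB f) :
    @Embedding (unionLang Lcap L') A B SA SB :=
  letI := SA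
  letI := SB
  { toFun := f
    inj' := hf.injective
    map_fun' := fun F x => by
      obtain ⟨i, F, rfl⟩ := exists_inclI_onFunction F
      let := structI Lcap L' i SA
      let := structI Lcap L' i SB
      exact (hf i).toElementaryEmbedding.toEmbedding.map_fun F x
    map_rel' := fun R x => by
      obtain ⟨i, R, rfl⟩ := exists_inclI_onRelation R
      let := structI Lcap L' i SA
      let := structI Lcap L' i SB
      exact (hf i).toElementaryEmbedding.toEmbedding.map_rel R x }

theorem IsReductElementary.isElementaryWith_structCap (hf : IsReductElementary SA SB f) :
    IsElementaryWith Lcap (structCap Lcap L' SA) (structCap Lcap L' SB) f := fun _ ψ a => by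
  have := (hf (Classical.arbitrary ι)).realize_formula ((inclCapI Lcap L' _).onFormula ψ) a
  rwa [realize_inclCapI_onFormula, realize_inclCapI_onFormula] at this

theorem IsReductElementary.exists_realize_of_interpolative (hf : IsReductElementary SA SB f)
    (hA : Interpolative Lcap L' SA) {K : ℕ} (J : Finset ι)
    (θ : ∀ i, (langI Lcap L' i).Formula ((univ : Set A) ⊕ Fin K)) (c : Fin K → B)
    (hc : ∀ i ∈ J, @Formula.Realize _ B (structI Lcap L' i SB) _ (θ i) (Sum.elim (f ∘ (↑)) c)) :
    ∃ x : Fin K → A, ∀ i ∈ J,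
      @Formula.Realize _ A (structI Lcap L' i SA) _ (θ i) (Sum.elim (↑) x) := by
  by_contra! hno
  let X i :=
    {x : Fin K → A | @Formula.Realize _ A (structI Lcap L' i SA) _ (θ i) (Sum.elim (↑) x)}
  have hsep : Separated Lcap L' SA J X := by
    refine not_not.1 fun hns => ?_
    obtain ⟨x, hx⟩ := (hA K J X fun i _ => definableWith_setOf_realize _ (θ i)).2 hns
    obtain ⟨i, hi, hxi⟩ := hno x
    exact hxi (mem_iInter₂.1 hx i hi)
  obtain ⟨Y, hXY, hY⟩ := hsep
  choose! ψ hψ using fun i hi => (hXY i hi).1.exists_formula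
  -- `θ i` implies `ψ i` in `A`, hence in `B`; but `A` omits the conjunction of the `ψ i`.
  have hψB : ∀ i ∈ J, @Formula.Realize Lcap B (structCap Lcap L' SB) _ (ψ i)
      (Sum.elim (f ∘ (↑)) c) := by
    intro i hi
    let := structI Lcap L' i SA
    let := structI Lcap L' i SB
    let χ := Formula.iAlls (Fin K) ((θ i).imp ((inclCapI Lcap L' i).onFormula (ψ i)))
    have hχ : χ.Realize (Subtype.val : ↥(univ : Set A) → A) := by
      simp only [χ, Formula.realize_iAlls, Formula.realize_imp, realize_inclCapI_onFormula]
      intro x hx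
      have := (hXY i hi).2 hx
      rwa [hψ i hi] at this
    rw [(hf i).realize_formula] at hχ
    simp only [χ, Formula.realize_iAlls, Formula.realize_imp, realize_inclCapI_onFormula] at hχ
    exact hχ c (hc i hi)
  let := structCap Lcap L' SA
  let := structCap Lcap L' SB
  let ω : Lcap.Formula (univ : Set A) :=
    ∼(Formula.iExs (Fin K) (Formula.iInf fun i : J => ψ i))
  have hω : ω.Realize (Subtype.val : ↥(univ : Set A) → A) := by
    simp only [ω, Formula.realize_not, Formula.realize_iExs, Formula.realize_iInf]
    rintro ⟨x, hx⟩
    refine (eq_empty_iff_forall_notMem.1 hY x) (mem_iInter₂.2 fun i hi => ?_)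
    rw [hψ i hi]
    exact hx ⟨i, hi⟩
  rw [hf.isElementaryWith_structCap.realize_formula] at hω
  simp only [ω, Formula.realize_not, Formula.realize_iExs, Formula.realize_iInf] at hω
  exact hω ⟨c, fun i => hψB i i.2⟩

theorem IsReductElementary.exists_leftInverse_realize [Nonempty A]
    (hf : IsReductElementary SA SB f) (hA : Interpolative Lcap L' SA)
    (R : Finset (Σ i, (langI Lcap L' i).Formula B))
    (hR : ∀ r ∈ R, @Formula.Realize _ B (structI Lcap L' r.1 SB) _ r.2 id) :
    ∃ h : B → A, Function.LeftInverse h f ∧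
      ∀ r ∈ R, @Formula.Realize _ A (structI Lcap L' r.1 SA) _ r.2 h := by
  classical
  -- The free variables of `R` outside the image of `f` become the unknowns of a system of
  -- formulas with parameters in `A`; the others are replaced by their preimages.
  let V := (R.biUnion fun r => r.2.freeVarFinset).filter (· ∉ range f)
  let e := V.equivFin
  let σ : B → (univ : Set A) ⊕ Fin V.card := fun b =>
    if hb : b ∈ V then .inr (e ⟨b, hb⟩) else .inl ⟨Function.invFun f b, trivial⟩
  have hfin : ∀ i, Finite (Sigma.mk i ⁻¹' (R : Set (Σ i, (langI Lcap L' i).Formula B))) :=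
    fun i => (R.finite_toSet.preimage sigma_mk_injective.injOn).to_subtype
  let θ i := Formula.iInf fun φ : Sigma.mk i ⁻¹' (R : Set (Σ i, (langI Lcap L' i).Formula B)) =>
    φ.1.relabel σ
  let c j : B := e.symm j
  have hσ : ∀ r ∈ R, ∀ b ∈ r.2.freeVarFinset, Sum.elim (f ∘ Subtype.val) c (σ b) = b := by
    intro r hr b hb
    by_cases hbV : b ∈ V
    · simp [σ, c, hbV]
    · have hbf : b ∈ range f := by
        by_contra hbf
        exact hbV (Finset.mem_filter.2 ⟨Finset.mem_biUnion.2 ⟨r, hr, hb⟩, hbf⟩)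
      simp [σ, hbV, Function.invFun_eq hbf]
  obtain ⟨x, hx⟩ := hf.exists_realize_of_interpolative hA (R.image Sigma.fst) θ c <| by
    intro i _
    let := structI Lcap L' i SB
    simp only [θ, Formula.realize_iInf, Formula.realize_relabel]
    intro ⟨φ, hφ⟩
    exact (BoundedFormula.realize_congr_of_eqOn_freeVarFinset (hσ _ hφ) _).2 (hR _ hφ)
  refine ⟨Sum.elim Subtype.val x ∘ σ, fun a => ?_, fun r hr => ?_⟩
  · have : f a ∉ V := fun h => (Finset.mem_filter.1 h).2 (mem_range_self a)
    simp [σ, this, Function.leftInverse_invFun hf.injective a]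
  · let := structI Lcap L' r.1 SA
    have := hx r.1 (Finset.mem_image_of_mem _ hr)
    simp only [θ, Formula.realize_iInf, Formula.realize_relabel] at this
    exact this ⟨r.2, hr⟩

theorem IsReductElementary.exists_ultrafilter [Nonempty A] (hf : IsReductElementary SA SB f)
    (hA : Interpolative Lcap L' SA) :
    ∃ U : Ultrafilter (B → A), {h | Function.LeftInverse h f} ∈ U ∧
      ∀ i (φ : (langI Lcap L' i).Formula B), @Formula.Realize _ B (structI Lcap L' i SB) _ φ id →
        {h | @Formula.Realize _ A (structI Lcap L' i SA) _ φ h} ∈ U := by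
  classical
  let S (R : Finset (Σ i, (langI Lcap L' i).Formula B)) : Set (B → A) :=
    {h | Function.LeftInverse h f ∧ ∀ r ∈ R,
      @Formula.Realize _ B (structI Lcap L' r.1 SB) _ r.2 id →
        @Formula.Realize _ A (structI Lcap L' r.1 SA) _ r.2 h}
  have hS : Antitone S := fun R R' hRR' h hh => ⟨hh.1, fun r hr => hh.2 r (hRR' hr)⟩
  have hne : (⨅ R, Filter.principal (S R)).NeBot := by
    refine Filter.iInf_neBot_of_directed'
      (Filter.monotone_principal.comp_antitone hS).directed_ge fun R => ?_
    obtain ⟨h, hinv, hh⟩ := hf.exists_leftInverse_realize hA (R.filter fun r =>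
      @Formula.Realize _ B (structI Lcap L' r.1 SB) _ r.2 id) fun r hr =>
        (Finset.mem_filter.1 hr).2
    exact Filter.principal_neBot_iff.2
      ⟨h, hinv, fun r hr hrB => hh r (Finset.mem_filter.2 ⟨hr, hrB⟩)⟩
  have hU : ∀ R, S R ∈ Ultrafilter.of (⨅ R, Filter.principal (S R)) := fun R =>
    Ultrafilter.of_le _ (Filter.mem_iInf_of_mem R (Filter.mem_principal_self _))
  refine ⟨Ultrafilter.of _, Filter.mem_of_superset (hU ∅) fun h hh => hh.1, fun i φ hφ => ?_⟩
  exact Filter.mem_of_superset (hU {⟨i, φ⟩}) fun h hh =>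
    hh.2 ⟨i, φ⟩ (Finset.mem_singleton_self _) hφ

theorem IsReductElementary.exists_isElementaryWith_comp [Nonempty A]
    (hf : IsReductElementary SA SB f) (hA : Interpolative Lcap L' SA) :
    ∃ (P : Type (max u v)) (SP : (unionLang Lcap L').Structure P) (g : B → P),
      IsReductElementary SB SP g ∧ IsElementaryWith (unionLang Lcap L') SA SP (g ∘ f) := by
  obtain ⟨U, hinv, hU⟩ := hf.exists_ultrafilter hA
  let g (b : B) : (U : Filter (B → A)).Product fun _ => A :=
    (fun h : B → A => h b : (B → A) → A)
  refine ⟨_, Ultraproduct.structure, g, fun i k φ a => ?_, fun k φ a => ?_⟩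
  · let := structI Lcap L' i SA
    let := structI Lcap L' i SB
    have hlos := Ultraproduct.realize_formula_cast (u := U) (M := fun _ => A) φ fun j h => h (a j)
    refine Iff.trans ?_ hlos.symm
    by_cases ha : φ.Realize a
    · exact iff_of_true ha <| Filter.mem_of_superset
        (hU i (φ.relabel a) (Formula.realize_relabel.2 ha)) fun h hh => Formula.realize_relabel.1 hh
    · refine iff_of_false ha fun hev => ?_
      have hna := hU i (∼(φ.relabel a)) (by
        rw [Formula.realize_not, Formula.realize_relabel]
        exact ha)
      obtain ⟨h, hh, hh'⟩ := (hev.and hna).exists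
      rw [Formula.realize_not, Formula.realize_relabel] at hh'
      exact hh' hh
  · let := SA
    have hlos := Ultraproduct.realize_formula_cast (u := U) (M := fun _ => A) φ
      fun j h => h (f (a j))
    refine Iff.trans ?_ hlos.symm
    have hfa : ∀ᶠ h : B → A in U, (fun j => h (f (a j))) = a :=
      Filter.mem_of_superset hinv fun h hh => funext fun j => hh (a j)
    exact Filter.eventually_const.symm.trans <|
      Filter.eventually_congr (hfa.mono fun h hh => by rw [hh]; rfl)

end Reducts

universe w

theorem realize_boundedFormula_iff_of_isReductElementary [Nonempty ι] {T : ∀ i, (langI Lcap L' i).Theory}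
    {Tstar : (unionLang Lcap L').Theory} (hstar : AxiomatizesInterpolative.{w} Lcap L' T Tstar)
    {α : Type*} {n : ℕ} (φ : (unionLang Lcap L').BoundedFormula α n) {A B : Type w}
    {SA : (unionLang Lcap L').Structure A} {SB : (unionLang Lcap L').Structure B}
    (hA : ModelsWith _ SA Tstar) (hB : ModelsWith _ SB Tstar) {f : A → B}
    (hf : IsReductElementary SA SB f) (v : α → A) (xs : Fin n → A) :
    @BoundedFormula.Realize _ A SA α n φ v xs ↔
      @BoundedFormula.Realize _ B SB α n φ (f ∘ v) (f ∘ xs) := by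
  induction φ generalizing A B with
  | falsum => exact Iff.rfl
  | equal t₁ t₂ =>
    let := SA
    let := SB
    exact ((BoundedFormula.IsAtomic.equal t₁ t₂).isQF.realize_embedding hf.toEmbedding).symm
  | rel R ts =>
    let := SA
    let := SB
    exact ((BoundedFormula.IsAtomic.rel R ts).isQF.realize_embedding hf.toEmbedding).symm
  | imp φ ψ ihφ ihψ => exact imp_congr (ihφ hA hB hf v xs) (ihψ hA hB hf v xs)
  | all ψ ih =>
    refine ⟨fun hall c => ?_, fun hall a => ?_⟩
    · have : Nonempty B := ⟨c⟩
      have : Nonempty A := hf.nonempty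
      obtain ⟨P, SP, g, hg, hgf⟩ := hf.exists_isElementaryWith_comp ((hstar A SA).1 hA).2
      refine (ih hB (hgf.modelsWith hA) hg _ _).2 ?_
      rw [Fin.comp_snoc]
      exact (hgf.realize_boundedFormula ψ.all v xs).1 hall (g c)
    · have := hall (f a)
      rwa [← Fin.comp_snoc, ← ih hA hB hf] at this

end InterpolativeFusion

open InterpolativeFusion FirstOrder FirstOrder.Language

theorem elementary_of_models_fusion_general
    {ι : Type*} [Nonempty ι] (Lcap : Language) (L' : ι → Language)
    (T : ∀ i : ι, (langI Lcap L' i).Theory)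
    (Tstar : (unionLang Lcap L').Theory)
    (hstar : AxiomatizesInterpolative.{w} Lcap L' T Tstar)
    (M N : Type w) (SM : (unionLang Lcap L').Structure M)
    (SN : (unionLang Lcap L').Structure N)
    (hM : ModelsWith (unionLang Lcap L') SM Tstar)
    (hN : ModelsWith (unionLang Lcap L') SN Tstar)
    (f : M → N)
    (hf : ∀ i : ι, IsElementaryWith (langI Lcap L' i) (structI Lcap L' i SM)
      (structI Lcap L' i SN) f) :
    IsElementaryWith (unionLang Lcap L') SM SN f := fun _ φ a =>
  (realize_boundedFormula_iff_of_isReductElementary hstar φ hM hN hf a default).trans <| by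
    rw [Unique.eq_default (f ∘ default)]; rfl

/-- Suppose the interpolative fusion `T∪*` exists (i.e. some theory `Tstar` axiomatizes the class
of interpolative `T∪`-models), `M∪` and `N∪` are models of `T∪*`, and `M i` is an elementary
substructure of `N i` for all `i`.  Then `M∪` is an elementary substructure of `N∪`. -/
theorem elementary_of_models_fusion
    {ι : Type*} [Nonempty ι] (Lcap : Language) (L' : ι → Language)
    (T : ∀ i : ι, (langI Lcap L' i).Theory)
    (hcons : SameCapConsequences Lcap L' T)
    (Tstar : (unionLang Lcap L').Theory)
    (hstar : AxiomatizesInterpolative.{w} Lcap L' T Tstar)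
    (M N : Type w) (SM : (unionLang Lcap L').Structure M)
    (SN : (unionLang Lcap L').Structure N)
    (hM : ModelsWith (unionLang Lcap L') SM Tstar)
    (hN : ModelsWith (unionLang Lcap L') SN Tstar)
    (f : M → N)
    (hf : ∀ i : ι, IsElementaryWith (langI Lcap L' i) (structI Lcap L' i SM)
      (structI Lcap L' i SN) f) :
    IsElementaryWith (unionLang Lcap L') SM SN f :=
  elementary_of_models_fusion_general Lcap L' T Tstar hstar M N SM SN hM hN f hf
end

section
/- Let T be an L-theory and 𝒦 a class of pairs (A, M) where M ⊨ T and A is a substructure of M. Then: (1) T is 𝒦-complete if and only if the class of T-models has the 𝒦-amalgamation property; (2) if T is 𝒦-complete, then A is algebraically closed in M for every (A, M) ∈ 𝒦 if and only if the class of T-models has the disjoint 𝒦-amalgamation property. -/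
namespace KCompleteness

open FirstOrder FirstOrder.Language

universe w

/-- `f : M → N` is an elementary map with respect to explicitly given structures. -/
def IsElementaryWith {M N : Type*} (L0 : Language) (SM : L0.Structure M)
    (SN : L0.Structure N) (f : M → N) : Prop :=
  ∀ (k : ℕ) (φ : L0.Formula (Fin k)) (a : Fin k → M),
    (letI := SM; φ.Realize a) ↔ (letI := SN; φ.Realize (f ∘ a))

/-- The algebraic closure of a set `A` in an `L0`-structure `M`: the set of elements satisfying
some formula with parameters from `A` having only finitely many realizations. -/
def aclSet (L0 : Language) (M : Type w) [L0.Structure M] (A : Set M) : Set M :=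
  {b : M | ∃ (k : ℕ) (φ : L0.Formula (Fin k ⊕ Fin 1)) (a : Fin k → M),
    (∀ j, a j ∈ A) ∧ φ.Realize (Sum.elim a fun _ => b) ∧
      {c : M | φ.Realize (Sum.elim a fun _ => c)}.Finite}

/-- `T0` is `K`-complete: for every pair `(A, M)` in the class `K`, every embedding of `A` into
a `T0`-model is partial elementary. -/
def KComplete (L0 : Language) (T0 : L0.Theory)
    (K : ∀ (M : Type w) [L0.Structure M], L0.Substructure M → Prop) : Prop :=
  ∀ (M : Type w) [L0.Structure M] (A : L0.Substructure M), K M A →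
    ∀ (N : Type w) [L0.Structure N], N ⊨ T0 →
      ∀ (f : A ↪[L0] N) (k : ℕ) (φ : L0.Formula (Fin k)) (a : Fin k → A),
        (φ.Realize (fun j => (a j : M)) ↔ φ.Realize (fun j => f (a j)))

/-- The class of `T0`-models has the `K`-amalgamation property. -/
def KAmalgamation (L0 : Language) (T0 : L0.Theory)
    (K : ∀ (M : Type w) [L0.Structure M], L0.Substructure M → Prop) : Prop :=
  ∀ (M : Type w) [SM : L0.Structure M] (A : L0.Substructure M), K M A →
    ∀ (N : Type w) [SN : L0.Structure N], N ⊨ T0 → ∀ f : A ↪[L0] N,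
      ∃ (N' : Type w) (SN' : L0.Structure N') (g : N → N') (f' : M → N'),
        IsElementaryWith L0 SN SN' g ∧ IsElementaryWith L0 SM SN' f' ∧
          ∀ a : A, f' (a : M) = g (f a)

/-- The class of `T0`-models has the disjoint `K`-amalgamation property. -/
def DisjointKAmalgamation (L0 : Language) (T0 : L0.Theory)
    (K : ∀ (M : Type w) [L0.Structure M], L0.Substructure M → Prop) : Prop :=
  ∀ (M : Type w) [SM : L0.Structure M] (A : L0.Substructure M), K M A →
    ∀ (N : Type w) [SN : L0.Structure N], N ⊨ T0 → ∀ f : A ↪[L0] N,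
      ∃ (N' : Type w) (SN' : L0.Structure N') (g : N → N') (f' : M → N'),
        IsElementaryWith L0 SN SN' g ∧ IsElementaryWith L0 SM SN' f' ∧
          (∀ a : A, f' (a : M) = g (f a)) ∧
          Set.range f' ∩ Set.range g = f' '' (A : Set M)

end KCompleteness


namespace KCAux

open FirstOrder FirstOrder.Language KCompleteness


open Classical in
/-- Infinite Δ-system lemma for families of finsets of bounded size. -/
theorem exists_delta_subfamily {X : Type*} :
    ∀ (t : ℕ) (S : Set (Finset X)), S.Infinite → (∀ C ∈ S, C.card ≤ t) →
      ∃ (D : Finset X) (T : Set (Finset X)), T ⊆ S ∧ T.Infinite ∧ (∀ C ∈ T, D ⊆ C) ∧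
        (∀ C ∈ T, ∀ C' ∈ T, C ≠ C' → C ∩ C' = D) := by
  intro t
  induction t with
  | zero =>
    intro S hS hcard
    exfalso
    refine hS (Set.Finite.subset (Set.finite_singleton ∅) ?_)
    intro C hC
    simpa using Finset.card_eq_zero.1 (Nat.le_zero.1 (hcard C hC))
  | succ t ih =>
    intro S hS hcard
    by_cases hx : ∃ x : X, {C ∈ S | x ∈ C}.Infinite
    · obtain ⟨x, hx⟩ := hx
      set S1 : Set (Finset X) := {C ∈ S | x ∈ C} with hS1def
      have hinj : Set.InjOn (fun C => Finset.erase C x) S1 := by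
        intro C hC C' hC' h
        have : insert x (C.erase x) = insert x (C'.erase x) := by
          simp only at h; rw [h]
        rwa [Finset.insert_erase hC.2, Finset.insert_erase hC'.2] at this
      have hEinf : ((fun C => Finset.erase C x) '' S1).Infinite :=
        Set.Infinite.image hinj hx
      have hEcard : ∀ C ∈ (fun C => Finset.erase C x) '' S1, C.card ≤ t := by
        rintro _ ⟨C, hC, rfl⟩
        simp only
        have := hcard C hC.1
        have h2 := Finset.card_erase_of_mem hC.2
        omega
      obtain ⟨D', T', hT'sub, hT'inf, hT'subset, hT'int⟩ := ih _ hEinf hEcard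
      refine ⟨insert x D', {C ∈ S1 | C.erase x ∈ T'}, fun C hC => hC.1.1, ?_, ?_, ?_⟩
      · -- infinite: image of this set under erase is T' (within image), injective
        have : (fun C => Finset.erase C x) '' {C ∈ S1 | C.erase x ∈ T'} = T' := by
          apply Set.eq_of_subset_of_subset
          · rintro _ ⟨C, hC, rfl⟩; exact hC.2
          · intro C hC
            obtain ⟨C₀, hC₀, rfl⟩ := hT'sub hC
            exact ⟨C₀, ⟨hC₀, hC⟩, rfl⟩
        intro hfin
        exact hT'inf (this ▸ Set.Finite.image _ hfin)
      · rintro C ⟨hC1, hC2⟩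
        intro y hy
        rcases Finset.mem_insert.1 hy with rfl | hy
        · exact hC1.2
        · exact Finset.mem_of_mem_erase (hT'subset _ hC2 hy)
      · rintro C ⟨hC1, hC2⟩ C' ⟨hC'1, hC'2⟩ hne
        have herane : C.erase x ≠ C'.erase x := fun h => hne (hinj hC1 hC'1 h)
        have : C.erase x ∩ C'.erase x = D' := hT'int _ hC2 _ hC'2 herane
        ext y
        simp only [Finset.mem_inter, Finset.mem_insert]
        constructor
        · intro ⟨h1, h2⟩
          by_cases hyx : y = x
          · exact Or.inl hyx
          · refine Or.inr ?_
            rw [← this]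
            exact Finset.mem_inter.2 ⟨Finset.mem_erase.2 ⟨hyx, h1⟩, Finset.mem_erase.2 ⟨hyx, h2⟩⟩
        · rintro (rfl | hy)
          · exact ⟨hC1.2, hC'1.2⟩
          · rw [← this] at hy
            have := Finset.mem_inter.1 hy
            exact ⟨Finset.mem_of_mem_erase this.1, Finset.mem_of_mem_erase this.2⟩
    · -- every point is in only finitely many sets: extract an infinite pairwise disjoint family
      push_neg at hx
      set S0 : Set (Finset X) := S \ {∅} with hS0def
      have hS0inf : S0.Infinite := Set.Infinite.diff hS (Set.finite_singleton _)
      -- the "pick" function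
      have pick : ∀ F : Finset (Finset X), ∃ C ∈ S0, ∀ C' ∈ F, C ∩ C' = ∅ := by
        intro F
        set U : Finset X := F.sup id with hU
        have hbad : {C ∈ S | ∃ x ∈ U, x ∈ C}.Finite := by
          have : {C ∈ S | ∃ x ∈ U, x ∈ C} ⊆ ⋃ x ∈ (U : Set X), {C ∈ S | x ∈ C} := by
            rintro C ⟨hC, x, hx1, hx2⟩
            exact Set.mem_biUnion hx1 ⟨hC, hx2⟩
          exact Set.Finite.subset (Set.Finite.biUnion (Finset.finite_toSet U)
            (fun x _ => hx x)) this
        have : (S0 \ {C ∈ S | ∃ x ∈ U, x ∈ C}).Infinite := Set.Infinite.diff hS0inf hbad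
        obtain ⟨C, hC⟩ := Set.Infinite.nonempty this
        refine ⟨C, hC.1, ?_⟩
        intro C' hC'
        rw [Finset.eq_empty_iff_forall_notMem]
        intro y hy
        have hy' := Finset.mem_inter.1 hy
        exact hC.2 ⟨hC.1.1, y, Finset.mem_sup.2 ⟨C', hC', hy'.2⟩, hy'.1⟩
      choose pickC pickC_mem pickC_disj using pick
      -- accumulate
      let G : ℕ → Finset (Finset X) := fun n => Nat.rec ∅ (fun _ Gn => insert (pickC Gn) Gn) n
      have hGsucc : ∀ n, G (n + 1) = insert (pickC (G n)) (G n) := fun n => rfl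
      have hGmono : ∀ m n, m ≤ n → G m ⊆ G n := by
        intro m n hmn
        induction n with
        | zero => cases Nat.le_zero.1 hmn; exact fun x h => h
        | succ n ihn =>
          rcases Nat.lt_or_ge m (n+1) with h | h
          · exact fun x hx => (hGsucc n) ▸ Finset.mem_insert_of_mem (ihn (Nat.lt_succ_iff.1 h) hx)
          · cases Nat.le_antisymm hmn h; exact fun x h => h
      have hnotmem : ∀ n, pickC (G n) ∉ G n := by
        intro n hmem
        have h1 : pickC (G n) ∩ pickC (G n) = ∅ := pickC_disj (G n) _ hmem
        rw [Finset.inter_self] at h1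
        exact (pickC_mem (G n)).2 (by simpa using h1)
      have hmemG : ∀ n, pickC (G n) ∈ G (n+1) := fun n => (hGsucc n) ▸ Finset.mem_insert_self _ _
      have hinj : Function.Injective (fun n => pickC (G n)) := by
        have key : ∀ m n, m < n → pickC (G m) ≠ pickC (G n) := by
          intro m n h heq
          have h1 : pickC (G m) ∈ G n := hGmono (m+1) n h (hmemG m)
          rw [heq] at h1
          exact hnotmem n h1
        intro m n hmn
        by_contra hne
        rcases Nat.lt_or_ge m n with h | h
        · exact key m n h hmn
        · exact key n m (lt_of_le_of_ne h (Ne.symm hne)) hmn.symm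
      refine ⟨∅, Set.range (fun n => pickC (G n)), ?_, ?_, ?_, ?_⟩
      · rintro _ ⟨n, rfl⟩; exact (pickC_mem (G n)).1
      · exact Set.infinite_range_of_injective hinj
      · rintro _ ⟨n, rfl⟩; exact Finset.empty_subset _
      · rintro _ ⟨m, rfl⟩ _ ⟨n, rfl⟩ hne
        simp only
        rcases Nat.lt_or_ge m n with h | h
        · rw [Finset.inter_comm]
          exact pickC_disj (G n) _ (hGmono (m+1) n h (hmemG m))
        · have h' : n < m := lt_of_le_of_ne h (by intro e; exact hne (by rw [e]))
          exact pickC_disj (G m) _ (hGmono (n+1) m h' (hmemG n))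

open Classical in
/-- The set of members of minimum-size "covers" of a family of tuples is finite. -/
theorem cover_members_finite {X ι : Type*} [Finite ι] (Sol : Set (ι → X)) (t0 : ℕ)
    (hmin : ∀ C : Finset X, (∀ x ∈ Sol, ∃ i, x i ∈ C) → t0 ≤ C.card) :
    {y : X | ∃ C : Finset X, y ∈ C ∧ C.card ≤ t0 ∧ ∀ x ∈ Sol, ∃ i, x i ∈ C}.Finite := by
  set W := {y : X | ∃ C : Finset X, y ∈ C ∧ C.card ≤ t0 ∧ ∀ x ∈ Sol, ∃ i, x i ∈ C} with hW
  by_contra hinf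
  have hinf : W.Infinite := hinf
  have hch : ∀ y ∈ W, ∃ C : Finset X, y ∈ C ∧ C.card ≤ t0 ∧ ∀ x ∈ Sol, ∃ i, x i ∈ C :=
    fun y hy => hy
  choose! cw hcw1 hcw2 hcw3 using hch
  set S : Set (Finset X) := cw '' W with hS
  have hSinf : S.Infinite := by
    intro hfin
    apply hinf
    have : W ⊆ ⋃ C ∈ S, (C : Set X) := by
      intro y hy
      exact Set.mem_biUnion (Set.mem_image_of_mem _ hy) (hcw1 y hy)
    exact Set.Finite.subset (Set.Finite.biUnion hfin (fun C _ => Finset.finite_toSet C)) this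
  have hScard : ∀ C ∈ S, C.card ≤ t0 := by rintro _ ⟨y, hy, rfl⟩; exact hcw2 y hy
  have hScover : ∀ C ∈ S, ∀ x ∈ Sol, ∃ i, x i ∈ C := by rintro _ ⟨y, hy, rfl⟩; exact hcw3 y hy
  obtain ⟨D, T, hTS, hTinf, hTsub, hTint⟩ := exists_delta_subfamily t0 S hSinf hScard
  -- D has card < t0
  obtain ⟨C1, hC1, C2, hC2, hC12⟩ := Set.Infinite.nontrivial hTinf
  have hDlt : D.card < t0 := by
    have h1 : D ⊆ C1 := hTsub _ hC1
    have hC1card : C1.card = t0 :=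
      le_antisymm (hScard _ (hTS hC1)) (hmin _ (hScover _ (hTS hC1)))
    have hC2card : C2.card = t0 :=
      le_antisymm (hScard _ (hTS hC2)) (hmin _ (hScover _ (hTS hC2)))
    rcases lt_or_eq_of_le (Finset.card_le_card h1) with h | h
    · omega
    · exfalso
      have hD1 : D = C1 := Finset.eq_of_subset_of_card_le h1 (le_of_eq h.symm)
      have hD2 : D ⊆ C2 := hTsub _ hC2
      have : C1 ⊆ C2 := hD1 ▸ hD2
      exact hC12 (Finset.eq_of_subset_of_card_le this (by omega))
  -- D is not a cover
  have hDnc : ¬ ∀ x ∈ Sol, ∃ i, x i ∈ D := fun h => absurd (hmin D h) (by omega)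
  push_neg at hDnc
  obtain ⟨xs, hxsSol, hxsD⟩ := hDnc
  -- map each C in T to a value of xs in C \ D ; injective
  have hι : Nonempty ι := ⟨(hScover C1 (hTS hC1) xs hxsSol).choose⟩
  have hval : ∀ C ∈ T, ∃ i, xs i ∈ C := fun C hC => hScover _ (hTS hC) xs hxsSol
  choose! vi hvi using hval
  have hinj : Set.InjOn (fun C => xs (vi C)) T := by
    intro C hC C' hC' heq
    simp only at heq
    by_contra hne
    have h1 : xs (vi C) ∈ C ∩ C' := by
      refine Finset.mem_inter.2 ⟨hvi C hC, ?_⟩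
      rw [heq]; exact hvi C' hC'
    rw [hTint C hC C' hC' hne] at h1
    exact hxsD _ h1
  have : (Set.range xs).Finite := Set.finite_range xs
  exact hTinf (Set.Finite.of_finite_image
    (Set.Finite.subset this (by rintro _ ⟨C, _, rfl⟩; exact Set.mem_range_self _)) hinj)



open FirstOrder FirstOrder.Language

universe u v w

variable {L : FirstOrder.Language.{u, v}} {p q : ℕ}

/-- "the tuple `ys` (the `Fin t` part) covers all solutions of `Φ` (parameters: `Fin q` part)" -/
noncomputable def covFormula (Φ : L.Formula (Fin p ⊕ Fin q)) (t : ℕ) :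
    L.Formula (Fin q ⊕ Fin t) :=
  Formula.iAlls (Fin p)
    ((Φ.relabel (Sum.elim Sum.inr (Sum.inl ∘ Sum.inl))).imp
      (BoundedFormula.iSup
        (fun ij : Fin p × Fin t => Term.equal (Term.var (Sum.inr ij.1)) (Term.var (Sum.inl (Sum.inr ij.2))))))

/-- "there is a covering tuple of size `t`" -/
noncomputable def etaFormula (Φ : L.Formula (Fin p ⊕ Fin q)) (t : ℕ) : L.Formula (Fin q) :=
  (covFormula Φ t).iExs (Fin t)

/-- "the extra variable is a member of some covering tuple of size `s+1`" -/
noncomputable def deltaFormula (Φ : L.Formula (Fin p ⊕ Fin q)) (s : ℕ) :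
    L.Formula (Fin q ⊕ Fin 1) :=
  ((covFormula Φ (s+1)).relabel
    (Sum.elim (Sum.inl ∘ Sum.inl)
      (fun j => Fin.cases (Sum.inl (Sum.inr 0)) (fun j' => Sum.inr j') j) :
        Fin q ⊕ Fin (s+1) → (Fin q ⊕ Fin 1) ⊕ Fin s)).iExs (Fin s)

variable {M : Type*} [L.Structure M]

theorem realize_covFormula {Φ : L.Formula (Fin p ⊕ Fin q)} {t : ℕ} {w : Fin q ⊕ Fin t → M} :
    (covFormula Φ t).Realize w ↔
      ∀ xs : Fin p → M, Φ.Realize (Sum.elim xs (w ∘ Sum.inl)) →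
        ∃ (i : Fin p) (j : Fin t), xs i = w (Sum.inr j) := by
  rw [covFormula, Formula.realize_iAlls]
  refine forall_congr' (fun xs => ?_)
  rw [Formula.realize_imp, Formula.realize_relabel]
  constructor
  · intro h hΦ
    have h1 : Φ.Realize ((fun a => Sum.elim w xs (id a)) ∘ Sum.elim Sum.inr (Sum.inl ∘ Sum.inl)) := by
      convert hΦ using 1
      funext a
      cases a <;> rfl
    have h2 := h h1
    rw [Formula.Realize] at h2
    rw [BoundedFormula.realize_iSup] at h2
    obtain ⟨ij, hij⟩ := h2
    refine ⟨ij.1, ij.2, ?_⟩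
    have := Formula.realize_equal.1 hij
    simpa [Term.realize] using this
  · intro h hΦ
    have h1 : Φ.Realize (Sum.elim xs (w ∘ Sum.inl)) := by
      convert hΦ using 1
      funext a
      cases a <;> rfl
    obtain ⟨i, j, hij⟩ := h h1
    rw [Formula.Realize, BoundedFormula.realize_iSup]
    refine ⟨(i, j), Formula.realize_equal.2 ?_⟩
    simpa [Term.realize] using hij

theorem realize_etaFormula {Φ : L.Formula (Fin p ⊕ Fin q)} {t : ℕ} {v : Fin q → M} :
    (etaFormula Φ t).Realize v ↔
      ∃ ys : Fin t → M, ∀ xs : Fin p → M, Φ.Realize (Sum.elim xs v) →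
        ∃ (i : Fin p) (j : Fin t), xs i = ys j := by
  rw [etaFormula, Formula.realize_iExs]
  refine exists_congr (fun ys => ?_)
  have : (fun a => Sum.elim v ys (id a)) = Sum.elim v ys := by funext a; cases a <;> rfl
  rw [realize_covFormula]
  constructor
  · intro h xs hΦ
    exact h xs hΦ
  · intro h xs hΦ
    exact h xs hΦ

theorem realize_deltaFormula {Φ : L.Formula (Fin p ⊕ Fin q)} {s : ℕ} {w : Fin q ⊕ Fin 1 → M} :
    (deltaFormula Φ s).Realize w ↔
      ∃ ys : Fin (s+1) → M, ys 0 = w (Sum.inr 0) ∧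
        ∀ xs : Fin p → M, Φ.Realize (Sum.elim xs (w ∘ Sum.inl)) →
          ∃ (i : Fin p) (j : Fin (s+1)), xs i = ys j := by
  rw [deltaFormula, Formula.realize_iExs]
  constructor
  · rintro ⟨rest, h⟩
    rw [Formula.realize_relabel, realize_covFormula] at h
    set w' : Fin q ⊕ Fin (s+1) → M := fun a => Sum.elim w rest
      ((Sum.elim (Sum.inl ∘ Sum.inl)
        (fun j => Fin.cases (Sum.inl (Sum.inr 0)) (fun j' => Sum.inr j') j)) a) with hw'
    refine ⟨w' ∘ Sum.inr, rfl, ?_⟩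
    intro xs hΦ
    obtain ⟨i, j, hij⟩ := h xs hΦ
    exact ⟨i, j, hij⟩
  · rintro ⟨ys, hy0, hcov⟩
    refine ⟨fun j => ys j.succ, ?_⟩
    rw [Formula.realize_relabel, realize_covFormula]
    intro xs hΦ
    obtain ⟨i, j, hij⟩ := hcov xs hΦ
    refine ⟨i, j, ?_⟩
    rw [hij]
    induction j using Fin.cases with
    | zero => exact hy0
    | succ j' => rfl




section NoEta

variable {L : FirstOrder.Language.{u, v}} {M : Type w} [L.Structure M]

theorem mem_aclSet_of_mem {A : Set M} {b : M} (hb : b ∈ A) : b ∈ aclSet L M A := by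
  refine ⟨1, Term.equal (Term.var (Sum.inr 0)) (Term.var (Sum.inl 0)), fun _ => b,
    fun _ => hb, ?_, ?_⟩
  · rw [Formula.realize_equal]; rfl
  · refine Set.Finite.subset (Set.finite_singleton b) ?_
    intro c hc
    have := Formula.realize_equal.1 hc
    simpa [Term.realize] using this

theorem infinite_of_not_mem_acl {A : Set M} {m : M} (hacl : aclSet L M A = A)
    (hm : m ∉ A) : (Set.univ : Set M).Infinite := by
  by_contra hfin
  rw [Set.not_infinite] at hfin
  apply hm
  rw [← hacl]
  refine ⟨0, Term.equal (Term.var (Sum.inr 0)) (Term.var (Sum.inr 0)), fun j => j.elim0,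
    fun j => j.elim0, ?_, ?_⟩
  · rw [Formula.realize_equal]
  · exact Set.Finite.subset hfin (Set.subset_univ _)

open Classical in
theorem no_eta {A : L.Substructure M} (hacl : aclSet L M ↑A = ↑A)
    {p q : ℕ} (Φ : L.Formula (Fin p ⊕ Fin q)) (av : Fin q → A) (mv : Fin p → M)
    (hm : ∀ i, mv i ∉ A) (hΦ : Φ.Realize (Sum.elim mv (fun j => (av j : M)))) :
    ∀ t, ¬ (etaFormula Φ t).Realize (fun j => ((av j : M))) := by
  intro t ht
  set v : Fin q → M := fun j => (av j : M) with hv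
  have hP : ∃ t, (etaFormula Φ t).Realize v := ⟨t, ht⟩
  obtain ⟨t0, hPt0, hminP⟩ : ∃ t0, (etaFormula Φ t0).Realize v ∧
      ∀ t' < t0, ¬ (etaFormula Φ t').Realize v :=
    ⟨Nat.find hP, Nat.find_spec hP, fun t' h => Nat.find_min hP h⟩
  set Sol : Set (Fin p → M) := {x | Φ.Realize (Sum.elim x v)} with hSol
  have hSolm : mv ∈ Sol := hΦ
  rcases Nat.eq_zero_or_pos t0 with h0 | hpos
  · subst h0
    obtain ⟨ys, hys⟩ := realize_etaFormula.1 hPt0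
    obtain ⟨i, j, _⟩ := hys mv hSolm
    exact j.elim0
  obtain ⟨s, hs⟩ : ∃ s, t0 = s + 1 := ⟨t0 - 1, by omega⟩
  subst hs
  obtain ⟨ys, hys⟩ := realize_etaFormula.1 hPt0
  have hmin : ∀ C : Finset M, (∀ x ∈ Sol, ∃ i, x i ∈ C) → s + 1 ≤ C.card := by
    intro C hC
    by_contra hlt
    push_neg at hlt
    refine hminP C.card hlt (realize_etaFormula.2 ⟨fun j => ((C.equivFin.symm j : C) : M), ?_⟩)
    intro xs hxs
    obtain ⟨i, hi⟩ := hC xs hxs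
    refine ⟨i, C.equivFin ⟨xs i, hi⟩, ?_⟩
    simp
  set W : Set M := {y | (deltaFormula Φ s).Realize (Sum.elim v (fun _ => y))} with hW
  have hWfin : W.Finite := by
    refine Set.Finite.subset (cover_members_finite Sol (s+1) hmin) ?_
    intro y hy
    obtain ⟨ys2, hy0, hcov⟩ := realize_deltaFormula.1 hy
    have hy0' : ys2 0 = y := hy0
    refine ⟨Finset.image ys2 Finset.univ, ?_, ?_, ?_⟩
    · rw [← hy0']; exact Finset.mem_image_of_mem _ (Finset.mem_univ 0)
    · calc (Finset.image ys2 Finset.univ).card ≤ Finset.univ.card := Finset.card_image_le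
        _ = s + 1 := by simp
    · intro x hx
      obtain ⟨i, j, hij⟩ := hcov x hx
      exact ⟨i, hij ▸ Finset.mem_image_of_mem _ (Finset.mem_univ j)⟩
  have hWA : W ⊆ ↑A := by
    intro y hy
    rw [← hacl]
    exact ⟨q, deltaFormula Φ s, v, fun j => (av j).2, hy,
      Set.Finite.subset hWfin (fun c hc => hc)⟩
  have hysW : ∀ j, ys j ∈ W := by
    intro j
    refine realize_deltaFormula.2 ⟨ys ∘ (Equiv.swap 0 j), ?_, ?_⟩
    · show ys (Equiv.swap 0 j 0) = _
      rw [Equiv.swap_apply_left]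
      rfl
    · intro xs hxs
      obtain ⟨i, j', hij'⟩ := hys xs hxs
      refine ⟨i, Equiv.swap 0 j j', ?_⟩
      rw [hij']
      show _ = ys (Equiv.swap 0 j (Equiv.swap 0 j j'))
      rw [Equiv.swap_apply_self]
  obtain ⟨i, j, hij⟩ := hys mv hSolm
  exact hm i (by rw [hij]; exact hWA (hysW j))

end NoEta


section Frag

variable {L : FirstOrder.Language.{u, v}} {M N : Type w} [SM : L.Structure M] [SN : L.Structure N]

/-- A "semantic formula with a tuple witnessing it in `M`". -/
structure Frag (L : FirstOrder.Language.{u, v}) (M N : Type w) [L.Structure M] [L.Structure N] :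
    Type w where
  k : ℕ
  setM : Set (Fin k → M)
  setN : Set (Fin k → N)
  is_fml : ∃ φ : L.Formula (Fin k), setM = {x | φ.Realize x} ∧ setN = {x | φ.Realize x}
  tup : Fin k → M
  holds : tup ∈ setM

/-- Index type for the ultraproduct. -/
def Idx (L : FirstOrder.Language.{u, v}) (M N : Type w) [L.Structure M] [L.Structure N] :
    Type w :=
  Finset (Frag L M N) × Finset N

instance : Preorder (Idx L M N) := by unfold Idx; infer_instance

instance : Nonempty (Idx L M N) := ⟨(∅, ∅)⟩

theorem Idx.directed : ∀ i j : Idx L M N, ∃ k, i ≤ k ∧ j ≤ k := by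
  classical
  rintro ⟨s1, F1⟩ ⟨s2, F2⟩
  exact ⟨(s1 ∪ s2, F1 ∪ F2), ⟨Finset.subset_union_left, Finset.subset_union_left⟩,
    ⟨Finset.subset_union_right, Finset.subset_union_right⟩⟩

theorem Idx.atTop_neBot : (Filter.atTop : Filter (Idx L M N)).NeBot := by
  rw [Filter.atTop_neBot_iff]
  exact ⟨inferInstance, ⟨Idx.directed⟩⟩

theorem Idx.Ici_mem (i0 : Idx L M N) : Set.Ici i0 ∈ (Filter.atTop : Filter (Idx L M N)) :=
  Filter.Ici_mem_atTop i0

open Classical in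
/-- The packaging of the ultraproduct amalgam. -/
theorem ultra_pack [Nonempty N] (A : L.Substructure M) (f : A ↪[L] N)
    (hfam : Idx L M N → M → N)
    (ha : ∀ i (a : A), hfam i a = f a)
    (hb : ∀ i : Idx L M N, ∀ d ∈ i.1, (fun j => hfam i (d.tup j)) ∈ d.setN) :
    ∃ (N' : Type w) (SN' : L.Structure N') (g : N → N') (f' : M → N'),
      KCompleteness.IsElementaryWith L SN SN' g ∧ KCompleteness.IsElementaryWith L SM SN' f' ∧
      (∀ a : A, f' (a : M) = g (f a)) ∧
      ((∀ i : Idx L M N, ∀ m, m ∉ A → hfam i m ∉ i.2) →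
        ∀ m, m ∉ A → ∀ n : N, f' m ≠ g n) := by
  haveI : (Filter.atTop : Filter (Idx L M N)).NeBot := Idx.atTop_neBot
  set U : Ultrafilter (Idx L M N) := Ultrafilter.of Filter.atTop with hUdef
  have hU : (U : Filter (Idx L M N)) ≤ Filter.atTop := Ultrafilter.of_le _
  have hCone : ∀ i0 : Idx L M N, Set.Ici i0 ∈ U := fun i0 => hU (Idx.Ici_mem i0)
  set N' : Type w := (U : Filter (Idx L M N)).Product (fun _ => N) with hN'def
  letI SN' : L.Structure N' := Ultraproduct.structure
  set g : N → N' := fun n => (↑(fun _ : Idx L M N => n) : N') with hgdef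
  set f' : M → N' := fun m => (↑(fun i : Idx L M N => hfam i m) : N') with hf'def
  have hg : KCompleteness.IsElementaryWith L SN SN' g := by
    intro k φ a
    have h2 := Ultraproduct.realize_formula_cast (u := U) φ (fun j => fun _ : Idx L M N => a j)
    exact ((h2.trans Filter.eventually_const).symm)
  have hf'fwd : ∀ (k : ℕ) (φ : L.Formula (Fin k)) (a : Fin k → M),
      φ.Realize a → φ.Realize (f' ∘ a) := by
    intro k φ a hφ
    have hEv : ∀ᶠ i : Idx L M N in U, φ.Realize (fun j => hfam i (a j)) := by
      set d : Frag L M N := ⟨k, {x | φ.Realize x}, {x | φ.Realize x}, ⟨φ, rfl, rfl⟩, a, hφ⟩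
        with hd
      refine Filter.mem_of_superset (hCone ({d}, ∅)) ?_
      intro i hi
      have hds : d ∈ i.1 := hi.1 (Finset.mem_singleton_self d)
      exact hb i d hds
    have := (Ultraproduct.realize_formula_cast (u := U) φ
      (fun j => fun i : Idx L M N => hfam i (a j))).2 hEv
    exact this
  have hf' : KCompleteness.IsElementaryWith L SM SN' f' := by
    intro k φ a
    constructor
    · exact hf'fwd k φ a
    · intro h
      by_contra hM
      have := hf'fwd k φ.not a (Formula.realize_not.2 hM)
      rw [Formula.realize_not] at this
      exact this h
  refine ⟨N', SN', g, f', hg, hf', ?_, ?_⟩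
  · intro a
    show (↑(fun i : Idx L M N => hfam i (a : M)) : N') = g (f a)
    show (↑(fun i : Idx L M N => hfam i (a : M)) : N') = (↑(fun _ : Idx L M N => f a) : N')
    congr 1
    funext i
    exact ha i a
  · intro hc m hm n heq
    have heq' : ∀ᶠ i : Idx L M N in U, hfam i m = n := by
      have h3 : (↑(fun i : Idx L M N => hfam i m) : N') = (↑(fun _ : Idx L M N => n) : N') := heq
      exact Quotient.eq'.1 h3
    have hbad : (Set.Ici ((∅ : Finset (Frag L M N)), ({n} : Finset N)) ∩
        {i : Idx L M N | hfam i m = n}).Nonempty := by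
      have h1 := Filter.inter_mem (hCone (∅, {n})) heq'
      exact @Filter.nonempty_of_mem _ _ (Ultrafilter.neBot U) _ h1
    obtain ⟨i, hiIci, hieq⟩ := hbad
    have : n ∈ i.2 := hiIci.2 (Finset.mem_singleton_self n)
    exact hc i m hm (hieq ▸ this)


/-- "there exist `k` pairwise distinct elements" as a sentence-like formula. -/
noncomputable def existsDistinct (L : FirstOrder.Language.{u, v}) (k : ℕ) : L.Formula (Fin 0) :=
  Formula.iExs (Fin k) (Formula.relabel (Sum.inr : Fin k → Fin 0 ⊕ Fin k)
    (BoundedFormula.iInf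
      (fun ij : ((Finset.univ : Finset (Fin k × Fin k)).filter (fun ij => ij.1 ≠ ij.2)) =>
        (Term.equal (Term.var ij.1.1) (Term.var ij.1.2)).not)))

theorem realize_existsDistinct {X : Type*} [L.Structure X] {k : ℕ} {v : Fin 0 → X} :
    (existsDistinct L k).Realize v ↔ ∃ xs : Fin k → X, ∀ i j, i ≠ j → xs i ≠ xs j := by
  rw [existsDistinct, Formula.realize_iExs]
  refine exists_congr (fun xs => ?_)
  rw [Formula.realize_relabel, Formula.Realize, BoundedFormula.realize_iInf]
  constructor
  · intro h i j hij
    have := h ⟨(i, j), Finset.mem_filter.2 ⟨Finset.mem_univ _, hij⟩⟩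
    rw [BoundedFormula.realize_not] at this
    intro he
    apply this
    refine Formula.realize_equal.2 ?_
    simpa [Term.realize] using he
  · rintro h ⟨ij, hij⟩
    rw [BoundedFormula.realize_not]
    intro he
    have := Formula.realize_equal.1 he
    simp only [Term.realize] at this
    exact h ij.1 ij.2 (Finset.mem_filter.1 hij).2 this

theorem infinite_N_of_infinite_M (A : L.Substructure M) (f : A ↪[L] N)
    (htr : ∀ (k : ℕ) (φ : L.Formula (Fin k)) (a : Fin k → A),
      (φ.Realize (fun j => ((a j : M))) ↔ φ.Realize (fun j => f (a j))))
    (hM : (Set.univ : Set M).Infinite) : (Set.univ : Set N).Infinite := by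
  rw [Set.infinite_univ_iff] at hM ⊢
  by_contra hN
  rw [not_infinite_iff_finite] at hN
  haveI := Fintype.ofFinite N
  haveI : Infinite M := hM
  set k := Fintype.card N + 1 with hk
  set a0 : Fin 0 → A := fun j => j.elim0 with ha0
  have hMk : (existsDistinct L k).Realize (fun j => ((a0 j : A) : M)) := by
    rw [realize_existsDistinct]
    obtain ⟨t, _, htcard⟩ :=
      Set.Infinite.exists_subset_card_eq (Set.infinite_univ (α := M)) k
    refine ⟨fun i => ((t.equivFin.symm (Fin.cast htcard.symm i) : t) : M), fun i j hij he => ?_⟩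
    apply hij
    have h2 := t.equivFin.symm.injective (Subtype.ext he)
    have h3 := congrArg Fin.val h2
    exact Fin.val_injective h3
  have hNk := (htr 0 (existsDistinct L k) a0).1 hMk
  rw [realize_existsDistinct] at hNk
  obtain ⟨xs, hxs⟩ := hNk
  have hinj : Function.Injective xs := by
    intro i j hij
    by_contra hne
    exact hxs i j hne hij
  have hcard := Fintype.card_le_of_injective xs hinj
  simp [hk] at hcard

open Classical in
/-- Existence of a fragment assignment `h : M → N` for a given index. -/
theorem exists_frag_h [Nonempty N] (A : L.Substructure M) (f : A ↪[L] N)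
    (htr : ∀ (k : ℕ) (φ : L.Formula (Fin k)) (a : Fin k → A),
      (φ.Realize (fun j => ((a j : M))) ↔ φ.Realize (fun j => f (a j))))
    (s : Finset (Frag L M N)) (F : Finset N)
    (hjunk : (∃ m : M, m ∉ A) → ∃ c0 : N, c0 ∉ F)
    (hNE : ∀ {p q : ℕ} (Φ : L.Formula (Fin p ⊕ Fin q)) (av : Fin q → A) (mv : Fin p → M),
      (∀ i, mv i ∉ A) → Φ.Realize (Sum.elim mv (fun j => (av j : M))) →
      ¬ (etaFormula Φ F.card).Realize (fun j => ((av j : M)))) :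
    ∃ h : M → N, (∀ a : A, h a = f a) ∧
      (∀ d ∈ s, (fun j => h (d.tup j)) ∈ d.setN) ∧
      (∀ m, m ∉ A → h m ∉ F) := by
  -- the elements used by the fragments
  set used : Finset M := s.sup (fun d => Finset.image d.tup Finset.univ) with hused
  have htup : ∀ d ∈ s, ∀ j, d.tup j ∈ used := by
    intro d hd j
    exact Finset.mem_of_subset (Finset.le_sup hd) (Finset.mem_image_of_mem _ (Finset.mem_univ j))
  set VF : Finset M := used.filter (fun m => m ∉ A) with hVF
  set AF : Finset M := used.filter (fun m => m ∈ A) with hAF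
  set p := VF.card
  set q := AF.card
  set eV := VF.equivFin with heV
  set eA := AF.equivFin with heA
  set mv : Fin p → M := fun i => ((eV.symm i : VF) : M) with hmv
  set av : Fin q → A := fun j =>
    ⟨((eA.symm j : AF) : M), (Finset.mem_filter.1 (eA.symm j).2).2⟩ with hav
  have hmvA : ∀ i, mv i ∉ A := fun i => (Finset.mem_filter.1 (eV.symm i).2).2
  -- index of a used element
  set ρIdx : ∀ m, m ∈ used → Fin p ⊕ Fin q := fun m hm =>
    if h : m ∈ A then Sum.inr (eA ⟨m, Finset.mem_filter.2 ⟨hm, h⟩⟩)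
    else Sum.inl (eV ⟨m, Finset.mem_filter.2 ⟨hm, h⟩⟩) with hρIdx
  set asgM : Fin p ⊕ Fin q → M := Sum.elim mv (fun j => (av j : M)) with hasgM
  have hkeyM : ∀ m (hm : m ∈ used), asgM (ρIdx m hm) = m := by
    intro m hm
    by_cases hmA : m ∈ A
    · simp only [hρIdx, dif_pos hmA, hasgM, Sum.elim_inr, hav, Equiv.symm_apply_apply]
    · simp only [hρIdx, dif_neg hmA, hasgM, Sum.elim_inl, hmv, Equiv.symm_apply_apply]
  -- the combined formula
  set Φ : L.Formula (Fin p ⊕ Fin q) := BoundedFormula.iInf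
    (fun d : s => Formula.relabel (fun j => ρIdx (d.1.tup j) (htup d.1 d.2 j))
      d.1.is_fml.choose) with hΦ
  have hΦM : Φ.Realize asgM := by
    rw [Formula.Realize, hΦ, BoundedFormula.realize_iInf]
    intro d
    show Formula.Realize _ asgM
    rw [Formula.realize_relabel]
    have h1 : asgM ∘ (fun j => ρIdx (d.1.tup j) (htup d.1 d.2 j)) = d.1.tup :=
      funext fun j => hkeyM (d.1.tup j) (htup d.1 d.2 j)
    rw [h1]
    have h2 := d.1.holds
    rw [d.1.is_fml.choose_spec.1] at h2
    exact h2
  -- no eta in M, transfer to N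
  have hnoM := hNE Φ av mv hmvA hΦM
  have hnoN : ¬ (etaFormula Φ F.card).Realize (fun j => f (av j)) := by
    intro h
    exact hnoM ((htr q (etaFormula Φ F.card) av).2 h)
  rw [realize_etaFormula] at hnoN
  push_neg at hnoN
  obtain ⟨nv, hnvΦ, hnvne⟩ := hnoN (fun j => ((F.equivFin.symm j : F) : N))
  have havoid : ∀ i, nv i ∉ F := by
    intro i hin
    exact hnvne i (F.equivFin ⟨nv i, hin⟩) (by simp)
  -- the assignment
  set c0 : N := if hex : ∃ c : N, c ∉ F then hex.choose else Classical.arbitrary N with hc0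
  set h : M → N := fun m =>
    if hm : m ∈ A then f ⟨m, hm⟩
    else if hu : m ∈ VF then nv (eV ⟨m, hu⟩)
    else c0 with hh
  have hkeyN : ∀ m (hm : m ∈ used), Sum.elim nv (fun j => f (av j)) (ρIdx m hm) = h m := by
    intro m hm
    by_cases hmA : m ∈ A
    · simp only [hρIdx, dif_pos hmA, Sum.elim_inr, hh]
      congr 1
      apply Subtype.ext
      simp [hav]
    · have hmVF : m ∈ VF := Finset.mem_filter.2 ⟨hm, hmA⟩
      simp only [hρIdx, dif_neg hmA, Sum.elim_inl, hh, dif_pos hmVF]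
  refine ⟨h, ?_, ?_, ?_⟩
  · intro a
    simp only [hh, dif_pos a.2]
  · intro d hd
    have hspec := d.is_fml.choose_spec
    have h3 : (Formula.relabel (fun j => ρIdx (d.tup j) (htup d hd j))
        d.is_fml.choose).Realize (Sum.elim nv (fun j => f (av j))) := by
      have h2 : Φ.Realize (Sum.elim nv (fun j => f (av j))) := hnvΦ
      rw [Formula.Realize, hΦ, BoundedFormula.realize_iInf] at h2
      exact h2 ⟨d, hd⟩
    rw [Formula.realize_relabel] at h3
    have h4 : (Sum.elim nv (fun j => f (av j))) ∘ (fun j => ρIdx (d.tup j) (htup d hd j)) =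
        fun j => h (d.tup j) := funext fun j => hkeyN (d.tup j) (htup d hd j)
    rw [h4] at h3
    rw [hspec.2]
    exact h3
  · intro m hm
    simp only [hh, dif_neg hm]
    split
    · exact havoid _
    · rw [hc0, dif_pos (hjunk ⟨m, hm⟩)]
      exact (hjunk ⟨m, hm⟩).choose_spec


theorem eta_zero_ne {p q : ℕ} {Φ : L.Formula (Fin p ⊕ Fin q)} {v : Fin q → M}
    (mv : Fin p → M) (hΦ : Φ.Realize (Sum.elim mv v)) : ¬ (etaFormula Φ 0).Realize v := by
  intro hyp
  obtain ⟨ys, hys⟩ := realize_etaFormula.1 hyp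
  obtain ⟨i, j, _⟩ := hys mv hΦ
  exact j.elim0

/-- The common elementary-amalgam construction; `dis = true` requires `acl(A) = A` and yields
disjointness. -/
theorem construct_amalg (A : L.Substructure M) (f : A ↪[L] N)
    (htr : ∀ (k : ℕ) (φ : L.Formula (Fin k)) (a : Fin k → A),
      (φ.Realize (fun j => ((a j : M))) ↔ φ.Realize (fun j => f (a j))))
    (hdis : Bool)
    (hacl : hdis = true → aclSet L M ↑A = ↑A) :
    ∃ (N' : Type w) (SN' : L.Structure N') (g : N → N') (f' : M → N'),
      KCompleteness.IsElementaryWith L SN SN' g ∧ KCompleteness.IsElementaryWith L SM SN' f' ∧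
      (∀ a : A, f' (a : M) = g (f a)) ∧
      (hdis = true → Set.range f' ∩ Set.range g = f' '' (A : Set M)) := by
  classical
  rcases isEmpty_or_nonempty M with hM | hM
  · -- M empty
    refine ⟨N, SN, id, fun m => isEmptyElim m, ?_, ?_, ?_, ?_⟩
    · intro k φ a
      exact Iff.rfl
    · intro k φ a
      rcases Nat.eq_zero_or_pos k with rfl | hk
      · have h1 := htr 0 φ (fun j => j.elim0)
        have e1 : (fun j : Fin 0 => (((fun j : Fin 0 => j.elim0) j : A) : M)) = a :=
          funext fun j => j.elim0
        have e2 : (fun j : Fin 0 => f ((fun j : Fin 0 => j.elim0) j)) =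
            ((fun m => isEmptyElim m) ∘ a) := funext fun j => j.elim0
        rw [e1, e2] at h1
        exact h1
      · exact (IsEmpty.false (a ⟨0, hk⟩)).elim
    · intro a
      exact (IsEmpty.false (a : M)).elim
    · intro _
      have h1 : Set.range (fun m : M => (isEmptyElim m : N)) = ∅ := Set.range_eq_empty _
      rw [h1]
      have h2 : (fun m : M => (isEmptyElim m : N)) '' (A : Set M) = ∅ := by
        rw [Set.eq_empty_iff_forall_notMem]
        rintro x ⟨m, _, _⟩
        exact IsEmpty.false m
      rw [h2, Set.empty_inter]
  · -- M nonempty, hence N nonempty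
    haveI : Nonempty N := by
      have hM1 : (existsDistinct L 1).Realize
          (fun j : Fin 0 => (((fun j : Fin 0 => j.elim0) j : A) : M)) := by
        rw [realize_existsDistinct]
        exact ⟨fun _ => Classical.arbitrary M, fun i j hij => absurd (Subsingleton.elim i j) hij⟩
      have hN1 := (htr 0 (existsDistinct L 1) (fun j => j.elim0)).1 hM1
      rw [realize_existsDistinct] at hN1
      obtain ⟨xs, _⟩ := hN1
      exact ⟨xs 0⟩
    set Fsel : Idx L M N → Finset N := fun i => if hdis then i.2 else ∅ with hFsel
    have hex : ∀ i : Idx L M N, ∃ h : M → N, (∀ a : A, h a = f a) ∧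
        (∀ d ∈ i.1, (fun j => h (d.tup j)) ∈ d.setN) ∧
        (∀ m, m ∉ A → h m ∉ Fsel i) := by
      intro i
      refine exists_frag_h A f htr i.1 (Fsel i) ?_ ?_
      · rintro ⟨m, hm⟩
        rcases hdis with _ | _
        · simp only [hFsel, Bool.false_eq_true, if_false]
          exact ⟨Classical.arbitrary N, Finset.notMem_empty _⟩
        · have hMinf := infinite_of_not_mem_acl (hacl rfl) hm
          have hNinf := infinite_N_of_infinite_M A f htr hMinf
          obtain ⟨c, _, hc⟩ := Set.Infinite.exists_notMem_finset hNinf (Fsel i)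
          exact ⟨c, hc⟩
      · intro p' q' Φ av mv hmv hΦ
        rcases hdis with _ | _
        · simp only [hFsel, Bool.false_eq_true, if_false, Finset.card_empty]
          exact eta_zero_ne mv hΦ
        · exact no_eta (hacl rfl) Φ av mv hmv hΦ (Fsel i).card
    choose hfam ha hb hc using hex
    obtain ⟨N', SN', g, f', hg, hf', hagree, hcond⟩ :=
      ultra_pack A f hfam ha (fun i => hb i)
    refine ⟨N', SN', g, f', hg, hf', hagree, ?_⟩
    intro hd
    have hdisj : ∀ m, m ∉ A → ∀ n : N, f' m ≠ g n := by
      apply hcond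
      intro i m hm
      have h5 := hc i m hm
      rw [hFsel, hd] at h5
      simpa using h5
    apply Set.eq_of_subset_of_subset
    · rintro x ⟨⟨m, rfl⟩, ⟨n, hn⟩⟩
      by_cases hm : m ∈ A
      · exact ⟨m, hm, rfl⟩
      · exact absurd hn.symm (hdisj m hm n)
    · rintro _ ⟨m, hm, rfl⟩
      exact ⟨⟨m, rfl⟩, ⟨f ⟨m, hm⟩, (hagree ⟨m, hm⟩).symm⟩⟩

end Frag

section Elem

variable {L : FirstOrder.Language.{u, v}} {X Y : Type w} [SX : L.Structure X] [SY : L.Structure Y]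

theorem elem_realize_sum {g : X → Y}
    (hel : KCompleteness.IsElementaryWith L SX SY g) {r t : ℕ}
    (ψ : L.Formula (Fin r ⊕ Fin t)) (v : Fin r ⊕ Fin t → X) :
    ψ.Realize v ↔ ψ.Realize (g ∘ v) := by
  have h1 := hel (r + t) (ψ.relabel ⇑finSumFinEquiv) (v ∘ ⇑finSumFinEquiv.symm)
  rw [Formula.realize_relabel, Formula.realize_relabel] at h1
  have e1 : (v ∘ ⇑finSumFinEquiv.symm) ∘ ⇑finSumFinEquiv = v := by
    funext x; simp
  have e2 : ((g ∘ (v ∘ ⇑finSumFinEquiv.symm)) ∘ ⇑finSumFinEquiv) = g ∘ v := by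
    funext x; simp
  rwa [e1, e2] at h1

theorem elem_injective {g : X → Y}
    (hel : KCompleteness.IsElementaryWith L SX SY g) : Function.Injective g := by
  intro x y hxy
  have h1 := hel 2 (Term.equal (Term.var 0) (Term.var 1))
    (fun i => if i = 0 then x else y)
  rw [Formula.realize_equal, Formula.realize_equal] at h1
  simp only [Term.realize, Function.comp] at h1
  simpa using h1.2 (by simpa using hxy)

end Elem

section DisjToAcl

variable {L : FirstOrder.Language.{u, v}} {M : Type w} [SM : L.Structure M]

open Classical in
theorem acl_of_disjoint (A : L.Substructure M)
    (hD : ∃ (N' : Type w) (SN' : L.Structure N') (g : M → N') (f' : M → N'),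
      KCompleteness.IsElementaryWith L SM SN' g ∧ KCompleteness.IsElementaryWith L SM SN' f' ∧
      (∀ a : A, f' (a : M) = g (A.subtype a)) ∧
      Set.range f' ∩ Set.range g = f' '' (A : Set M)) :
    aclSet L M ↑A = ↑A := by
  obtain ⟨N', SN', g, f', hg, hf', hagree, hrange⟩ := hD
  apply Set.eq_of_subset_of_subset
  · rintro b ⟨k, φ, a, haA, hreal, hfin⟩
    -- the solution set and its enumeration
    set EF : Finset M := hfin.toFinset with hEF
    set l := EF.card with hl
    set ye : Fin l → M := fun j => ((EF.equivFin.symm j : EF) : M) with hye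
    set Φ' : L.Formula (Fin 1 ⊕ Fin k) :=
      φ.relabel (Sum.elim Sum.inr (fun _ => Sum.inl 0)) with hΦ'
    have hΦ'real : ∀ (c : M) (w : Fin k → M),
        Φ'.Realize (Sum.elim (fun _ : Fin 1 => c) w) ↔ φ.Realize (Sum.elim w (fun _ => c)) := by
      intro c w
      rw [hΦ', Formula.realize_relabel]
      constructor
      · intro h; convert h using 2; funext x; cases x <;> rfl
      · intro h; convert h using 2; funext x; cases x <;> rfl
    -- the cover statement in M
    have hcovM : (covFormula Φ' l).Realize (Sum.elim a ye) := by
      rw [realize_covFormula]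
      intro xs hxs
      have h1 : φ.Realize (Sum.elim a (fun _ => xs 0)) := by
        rw [← hΦ'real]
        have e : Sum.elim (fun _ : Fin 1 => xs 0) a =
            Sum.elim xs ((Sum.elim a ye) ∘ Sum.inl) := by
          funext x
          cases x with
          | inl i =>
            have hi : i = 0 := Subsingleton.elim _ _
            subst hi
            rfl
          | inr j => rfl
        rw [e]
        exact hxs
      have h2 : xs 0 ∈ EF := by rw [hEF, Set.Finite.mem_toFinset]; exact h1
      refine ⟨0, EF.equivFin ⟨xs 0, h2⟩, ?_⟩
      simp [hye]
    -- parameters agree between f' and g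
    have hpar : ∀ j, f' (a j) = g (a j) := fun j => hagree ⟨a j, haA j⟩
    -- f' b is a solution in N'
    have hbsol : Φ'.Realize (Sum.elim (fun _ : Fin 1 => f' b) (f' ∘ a)) := by
      have h1 : Φ'.Realize (Sum.elim (fun _ : Fin 1 => b) a) := by
        rw [hΦ'real]; exact hreal
      have h2 := (elem_realize_sum hf' Φ' (Sum.elim (fun _ : Fin 1 => b) a)).1 h1
      have e : f' ∘ Sum.elim (fun _ : Fin 1 => b) a =
          Sum.elim (fun _ : Fin 1 => f' b) (f' ∘ a) := by
        funext x; cases x <;> rfl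
      rw [← e]
      exact h2
    -- transfer the cover statement along g and apply it to f' b
    have hcovG := (elem_realize_sum hg (covFormula Φ' l) (Sum.elim a ye)).1 hcovM
    rw [realize_covFormula] at hcovG
    obtain ⟨i, j, hij⟩ := hcovG (fun _ => f' b) (by
      have e2 : Sum.elim (fun _ : Fin 1 => f' b) ((g ∘ Sum.elim a ye) ∘ Sum.inl) =
          Sum.elim (fun _ : Fin 1 => f' b) (f' ∘ a) := by
        funext x
        cases x with
        | inl i => rfl
        | inr j => exact (hpar j).symm
      rw [e2]
      exact hbsol)
    have hfbg : f' b ∈ Set.range f' ∩ Set.range g := ⟨⟨b, rfl⟩, ⟨ye j, hij.symm⟩⟩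
    rw [hrange] at hfbg
    obtain ⟨a0, ha0, heq⟩ := hfbg
    have hba := elem_injective hf' heq
    rwa [← hba]
  · exact fun b hb => mem_aclSet_of_mem hb

end DisjToAcl



end KCAux

open KCompleteness FirstOrder FirstOrder.Language

/-- **`K`-completeness and amalgamation.**  Let `T0` be an `L0`-theory and `K` a class of pairs
`(A, M)` with `M ⊨ T0` and `A` a substructure of `M`.  Then (1) `T0` is `K`-complete if and only
if the class of `T0`-models has the `K`-amalgamation property; and (2) if `T0` is `K`-complete,
then every `A` with `(A, M) ∈ K` is algebraically closed in `M` if and only if the class of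
`T0`-models has the disjoint `K`-amalgamation property. -/
theorem kComplete_iff_kAmalgamation
    (L0 : Language) (T0 : L0.Theory)
    (K : ∀ (M : Type w) [L0.Structure M], L0.Substructure M → Prop)
    (hK : ∀ (M : Type w) [L0.Structure M] (A : L0.Substructure M), K M A → M ⊨ T0) :
    (KComplete.{w} L0 T0 K ↔ KAmalgamation.{w} L0 T0 K) ∧
    (KComplete.{w} L0 T0 K →
      ((∀ (M : Type w) [L0.Structure M] (A : L0.Substructure M), K M A →
          aclSet L0 M (A : Set M) = (A : Set M)) ↔
        DisjointKAmalgamation.{w} L0 T0 K)) := by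
  constructor
  · constructor
    · -- KComplete → KAmalgamation
      intro hKC M SM A hKA N SN hNT f
      obtain ⟨N', SN', g, f', hg, hf', hagree, _⟩ :=
        KCAux.construct_amalg A f (fun k φ a => hKC M A hKA N hNT f k φ a) false
          (fun h => absurd h (by simp))
      exact ⟨N', SN', g, f', hg, hf', hagree⟩
    · -- KAmalgamation → KComplete
      intro hAm M SM A hKA N SN hNT f k φ a
      obtain ⟨N', SN', g, f', hg, hf', hagree⟩ := hAm M A hKA N hNT f
      have h1 := hf' k φ (fun j => ((a j : M)))
      have h2 := hg k φ (fun j => f (a j))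
      have e : (f' ∘ fun j => ((a j : M))) = (g ∘ fun j => f (a j)) := by
        funext j; exact hagree (a j)
      rw [e] at h1
      exact h1.trans h2.symm
  · intro hKC
    constructor
    · -- acl → disjoint amalgamation
      intro hacl M SM A hKA N SN hNT f
      obtain ⟨N', SN', g, f', hg, hf', hagree, hd⟩ :=
        KCAux.construct_amalg A f (fun k φ a => hKC M A hKA N hNT f k φ a) true
          (fun _ => hacl M A hKA)
      exact ⟨N', SN', g, f', hg, hf', hagree, hd rfl⟩
    · -- disjoint amalgamation → acl
      intro hDis M SM A hKA
      apply KCAux.acl_of_disjoint A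
      obtain ⟨N', SN', g, f', hg, hf', hagree, hrange⟩ :=
        hDis M A hKA M (hK M A hKA) A.subtype
      exact ⟨N', SN', g, f', hg, hf', hagree, hrange⟩
end

section
/- Let (K; ∂₁,…,∂_m) be a 𝒟-field with associated F-algebra homomorphism δ_K : K → 𝒟_K. Then (K; ∂₁,…,∂_m) is inversive if and only if e = (e₀,…,e_m) is a basis of 𝒟_K as a K-vector space with scalar multiplication given through δ_K (i.e., every element of 𝒟_K can be written uniquely as Σ_{i=0}^m δ_K(a_i)·e_i with a₀,…,a_m ∈ K). In particular, if 𝒟_F is a local F-algebra, then e is a basis of 𝒟_K via δ_K. -/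
/-!
Let `μ : K ⊗ D → K ⊗ D` be the `F`-algebra map `a ⊗ d ↦ δ a * (1 ⊗ d)`; in the `K`-basis `1 ⊗ eᵢ`
it is `(aᵢ) ↦ ∑ δ(aᵢ) (1 ⊗ eᵢ)`, so `e` is a `δ`-basis exactly when `μ` is bijective.

If `J` is a maximal ideal of `K ⊗ D` and `𝔪 = J ∩ D`, then `K → (K ⊗ D)/(K ⊗ 𝔪) ≅ K ⊗ (D/𝔪) = K`
is an isomorphism, so every element is `≡ a ⊗ 1 (mod J)`; as `μ (a ⊗ 1) = δ a`, a surjective `μ`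
makes `δ` onto every residue field. Conversely, if `δ` is onto each residue field, the range of
`μ`, which contains `1 ⊗ D`, meets every class modulo each `K ⊗ 𝔪`; Chinese remainder elements of
`D` glue these into `K ⊗ D = range μ + K ⊗ rad D`, and since `rad D` is nilpotent and lies in
`range μ`, iterating gives `range μ = K ⊗ D`. Finally a surjective endomorphism of the noetherian
ring `K ⊗ D` is injective.

In the local case `δ a - a ⊗ 1 = a ⊗ (e₀ - 1) + ∑ ∂ᵢ a ⊗ eᵢ` lies in `K ⊗ ker π`, which is
contained in every maximal ideal, so `δ` is onto every residue field.
-/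

open scoped TensorProduct
open Algebra.TensorProduct (includeRight productMap)

theorem RingHom.injective_of_surjective_of_isNoetherianRing {A : Type*} [CommRing A]
    [IsNoetherianRing A] (g : A →+* A) (hg : Function.Surjective g) : Function.Injective g := by
  have ker_mono : Monotone fun n : ℕ ↦ RingHom.ker (g ^ n) := by
    refine monotone_nat_of_le_succ fun n x hx ↦ ?_
    rw [RingHom.mem_ker, RingHom.coe_pow] at hx ⊢
    rw [Function.iterate_succ_apply', hx, map_zero]
  obtain ⟨n, hn⟩ := monotone_stabilizes_iff_noetherian.mpr inferInstance ⟨_, ker_mono⟩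
  refine (injective_iff_map_eq_zero g).mpr fun x hx ↦ ?_
  obtain ⟨y, rfl⟩ := (RingHom.coe_pow g n ▸ hg.iterate n) x
  have hy : y ∈ RingHom.ker (g ^ (n + 1)) := by
    rwa [RingHom.mem_ker, RingHom.coe_pow, Function.iterate_succ_apply']
  have hker : RingHom.ker (g ^ n) = RingHom.ker (g ^ (n + 1)) := hn (n + 1) n.le_succ
  rwa [← hker, RingHom.mem_ker, RingHom.coe_pow] at hy

theorem exists_sub_mem_map_iInf_of_pairwise_isCoprime {R A ι : Type*} [CommRing R]
    [CommRing A] [Finite ι] (f : R →+* A) (S : Subring A) (hfS : ∀ r, f r ∈ S)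
    {I : ι → Ideal R} (hI : Pairwise fun i j ↦ IsCoprime (I i) (I j))
    (h : ∀ i x, ∃ s ∈ S, x - s ∈ (I i).map f) (x : A) :
    ∃ s ∈ S, x - s ∈ (⨅ i, I i).map f := by
  classical
  cases nonempty_fintype ι
  have hcop (i : ι) : IsCoprime (I i) (⨅ j ∈ Finset.univ.erase i, I j) :=
    Ideal.isCoprime_biInf fun j hj ↦ hI (Finset.ne_of_mem_erase hj).symm
  choose u hu e he hue using fun i ↦ Ideal.isCoprime_iff_exists.mp (hcop i)
  choose s hs hxs using fun i ↦ h i x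
  have he_mem {i j : ι} (hij : i ≠ j) : e j ∈ I i :=
    Ideal.mem_iInf.mp (Ideal.mem_iInf.mp (he j) i) (Finset.mem_erase.mpr ⟨hij, Finset.mem_univ i⟩)
  have hsum : 1 - ∑ j, e j ∈ ⨅ i, I i := by
    refine Ideal.mem_iInf.mpr fun i ↦ ?_
    rw [← Finset.add_sum_erase _ _ (Finset.mem_univ i), ← hue i, add_comm (e i),
      add_sub_add_right_eq_sub]
    exact sub_mem (hu i) (sum_mem fun j hj ↦ he_mem (Finset.ne_of_mem_erase hj).symm)
  have hterm (i : ι) : (x - s i) * f (e i) ∈ (⨅ j, I j).map f := by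
    have hle : I i * (⨅ j ∈ Finset.univ.erase i, I j) ≤ ⨅ j, I j := by
      refine Ideal.mul_le_inf.trans (le_iInf fun j ↦ ?_)
      by_cases hji : j = i
      · exact hji ▸ inf_le_left
      · exact inf_le_right.trans (biInf_le _ (Finset.mem_erase.mpr ⟨hji, Finset.mem_univ j⟩))
    refine Ideal.map_mono hle ?_
    rw [Ideal.map_mul]
    exact Ideal.mul_mem_mul (hxs i) (Ideal.mem_map_of_mem f (he i))
  refine ⟨∑ i, s i * f (e i), sum_mem fun i _ ↦ S.mul_mem (hs i) (hfS _), ?_⟩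
  have hsplit :
      x - ∑ i, s i * f (e i) = x * f (1 - ∑ i, e i) + ∑ i, (x - s i) * f (e i) := by
    simp only [map_sub, map_one, map_sum, mul_sub, Finset.mul_sum, sub_mul,
      Finset.sum_sub_distrib]
    ring
  rw [hsplit]
  exact add_mem (Ideal.mul_mem_left _ _ (Ideal.mem_map_of_mem f hsum)) (sum_mem fun i _ ↦ hterm i)

theorem Subring.eq_top_of_forall_exists_sub_mem_map_of_isNilpotent {R A : Type*} [CommRing R]
    [CommRing A] (f : R →+* A) (S : Subring A) (hfS : ∀ r, f r ∈ S) {N : Ideal R}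
    (hN : IsNilpotent N) (h : ∀ x, ∃ s ∈ S, x - s ∈ N.map f) : S = ⊤ := by
  have step (t : ℕ) : ∀ y ∈ (N ^ t).map f, ∃ s ∈ S, y - s ∈ (N ^ (t + 1)).map f := by
    intro y hy
    induction hy using Submodule.span_induction with
    | mem z hz =>
      obtain ⟨r, -, rfl⟩ := hz
      exact ⟨f r, hfS r, by simp⟩
    | zero => exact ⟨0, S.zero_mem, by simp⟩
    | add y z _ _ hy hz =>
      obtain ⟨s, hs, hys⟩ := hy
      obtain ⟨s', hs', hzs'⟩ := hz
      exact ⟨s + s', S.add_mem hs hs', by rw [add_sub_add_comm]; exact Ideal.add_mem _ hys hzs'⟩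
    | smul a y hy ihy =>
      obtain ⟨s, hs, hys⟩ := ihy
      obtain ⟨b, hb, hab⟩ := h a
      have hmul : (a - b) * y ∈ (N ^ (t + 1)).map f := by
        rw [pow_succ', Ideal.map_mul]
        exact Ideal.mul_mem_mul hab hy
      refine ⟨b * s, S.mul_mem hb hs, ?_⟩
      rw [show a • y - b * s = (a - b) * y + b * (y - s) by rw [smul_eq_mul]; ring]
      exact Ideal.add_mem _ hmul (Ideal.mul_mem_left _ _ hys)
  have approx (t : ℕ) (x : A) : ∃ s ∈ S, x - s ∈ (N ^ t).map f := by
    induction t generalizing x with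
    | zero => exact ⟨0, S.zero_mem, by simp [Ideal.map_top]⟩
    | succ t ih =>
      obtain ⟨s, hs, hxs⟩ := ih x
      obtain ⟨s', hs', hs''⟩ := step t _ hxs
      exact ⟨s + s', S.add_mem hs hs', by rwa [← sub_sub]⟩
  obtain ⟨n, hn⟩ := hN
  refine eq_top_iff.mpr fun x _ ↦ ?_
  obtain ⟨s, hs, hxs⟩ := approx n x
  rw [hn, Ideal.zero_eq_bot, Ideal.map_bot, Ideal.mem_bot, sub_eq_zero] at hxs
  exact hxs ▸ hs

section TensorProduct

variable {F D K : Type*} [Field F] [CommRing D] [Algebra F D] [Field K] [Algebra F K]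

theorem bijective_algebraMap_quotient_map_includeRight {I : Ideal D}
    (hI : Function.Bijective (algebraMap F (D ⧸ I))) :
    Function.Bijective
      (algebraMap K ((K ⊗[F] D) ⧸ I.map (includeRight : D →ₐ[F] K ⊗[F] D))) := by
  let e : ((K ⊗[F] D) ⧸ I.map (includeRight : D →ₐ[F] K ⊗[F] D)) ≃ₐ[K] K :=
    (Algebra.TensorProduct.tensorQuotientEquiv (R := F) K D K I).symm.trans
      ((Algebra.TensorProduct.congr AlgEquiv.refl
        (AlgEquiv.ofBijective (Algebra.ofId F (D ⧸ I)) hI).symm).trans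
        (Algebra.TensorProduct.rid F K K))
  convert e.symm.bijective using 1
  funext a
  exact (e.symm.commutes a).symm

theorem isMaximal_map_includeRight {I : Ideal D}
    (hI : Function.Bijective (algebraMap F (D ⧸ I))) :
    (I.map (includeRight : D →ₐ[F] K ⊗[F] D)).IsMaximal :=
  Ideal.Quotient.maximal_of_isField _ <|
    (RingEquiv.ofBijective _ (bijective_algebraMap_quotient_map_includeRight hI)).symm.toMulEquiv
      |>.isField (Field.toIsField K)

theorem exists_sub_tmul_one_mem [FiniteDimensional F D]
    (hres : ∀ I : Ideal D, I.IsMaximal → Function.Bijective (algebraMap F (D ⧸ I)))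
    {J : Ideal (K ⊗[F] D)} (hJ : J.IsMaximal) (r : K ⊗[F] D) : ∃ a : K, r - a ⊗ₜ[F] 1 ∈ J := by
  have : IsArtinianRing D := isArtinian_of_tower F inferInstance
  have : J.IsPrime := hJ.isPrime
  have hI : (J.comap (includeRight : D →ₐ[F] K ⊗[F] D)).IsMaximal :=
    IsArtinianRing.isMaximal_of_isPrime _
  obtain ⟨a, ha⟩ := (bijective_algebraMap_quotient_map_includeRight (K := K) (hres _ hI)).2
    (Ideal.Quotient.mk _ r)
  exact ⟨a, Ideal.map_comap_le (Ideal.Quotient.eq.mp ha.symm)⟩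

end TensorProduct

section DField

variable {F D K : Type*} [Field F] [CommRing D] [Algebra F D] [Field K] [Algebra F K]
  (δ : K →ₐ[F] K ⊗[F] D)

/-- The maximal ideals of `K ⊗ D` are those of the local factors `𝒟_K^j`, so this says that
every associated endomorphism `σ_j` is onto. -/
def IsInversive : Prop :=
  ∀ J : Ideal (K ⊗[F] D), J.IsMaximal → Function.Surjective fun a : K => Ideal.Quotient.mk J (δ a)

theorem existsUnique_sum_iff_bijective_productMap {m : ℕ}
    (bD : Module.Basis (Fin (m + 1)) F D) :
    (∀ r : K ⊗[F] D, ∃! a : Fin (m + 1) → K,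
        r = ∑ i : Fin (m + 1), δ (a i) * ((1 : K) ⊗ₜ[F] bD i)) ↔
      Function.Bijective (productMap δ includeRight) := by
  let bK := bD.baseChange K
  have hsum (a : Fin (m + 1) → K) : productMap δ includeRight (bK.equivFun.symm a) =
      ∑ i : Fin (m + 1), δ (a i) * ((1 : K) ⊗ₜ[F] bD i) := by
    simp [bK, Module.Basis.equivFun_symm_apply, TensorProduct.smul_tmul']
  rw [← Function.Bijective.of_comp_iff _ bK.equivFun.symm.bijective,
    Function.bijective_iff_existsUnique]
  simp only [Function.comp_apply, hsum, eq_comm]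

theorem surjective_productMap_of_isInversive [FiniteDimensional F D]
    (hres : ∀ I : Ideal D, I.IsMaximal → Function.Bijective (algebraMap F (D ⧸ I)))
    (H : IsInversive δ) : Function.Surjective (productMap δ includeRight) := by
  have : IsArtinianRing D := isArtinian_of_tower F inferInstance
  let S := (productMap δ includeRight).range.toSubring
  let f : D →+* K ⊗[F] D := (includeRight : D →ₐ[F] K ⊗[F] D).toRingHom
  have hfS (d : D) : f d ∈ S := ⟨1 ⊗ₜ d, by simp [f]⟩
  have hS (I : MaximalSpectrum D) (x : K ⊗[F] D) : ∃ s ∈ S, x - s ∈ I.asIdeal.map f := by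
    obtain ⟨a, ha⟩ :=
      H _ (isMaximal_map_includeRight (hres _ I.isMaximal)) (Ideal.Quotient.mk _ x)
    exact ⟨δ a, ⟨a ⊗ₜ 1, by simp [← Algebra.TensorProduct.one_def]⟩, Ideal.Quotient.eq.mp ha.symm⟩
  have hN : IsNilpotent (⨅ I : MaximalSpectrum D, I.asIdeal) :=
    IsArtinianRing.nilradical_eq_iInf D ▸ IsArtinianRing.isNilpotent_nilradical
  have hS_top : S = ⊤ :=
    Subring.eq_top_of_forall_exists_sub_mem_map_of_isNilpotent f S hfS hN
      (exists_sub_mem_map_iInf_of_pairwise_isCoprime f S hfS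
        (fun _ _ h ↦ MaximalSpectrum.isCoprime_of_ne h) hS)
  exact fun x ↦ (hS_top ▸ Subring.mem_top x : x ∈ S)

theorem isInversive_of_surjective_productMap [FiniteDimensional F D]
    (hres : ∀ I : Ideal D, I.IsMaximal → Function.Bijective (algebraMap F (D ⧸ I)))
    (hμ : Function.Surjective (productMap δ includeRight)) : IsInversive δ := by
  intro J hJ x
  obtain ⟨r, rfl⟩ := Ideal.Quotient.mk_surjective x
  obtain ⟨r, rfl⟩ := hμ r
  obtain ⟨a, ha⟩ :=
    exists_sub_tmul_one_mem hres (Ideal.comap_isMaximal_of_surjective _ hμ (H := hJ)) r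
  refine ⟨a, Ideal.Quotient.eq.mpr ?_⟩
  rw [← neg_mem_iff, neg_sub]
  simpa [← Algebra.TensorProduct.one_def] using ha

theorem bijective_productMap_iff_isInversive [FiniteDimensional F D]
    (hres : ∀ I : Ideal D, I.IsMaximal → Function.Bijective (algebraMap F (D ⧸ I))) :
    Function.Bijective (productMap δ includeRight) ↔ IsInversive δ := by
  have : IsNoetherianRing (K ⊗[F] D) := isNoetherian_of_tower K inferInstance
  refine ⟨fun h ↦ isInversive_of_surjective_productMap δ hres h.2, fun H ↦ ?_⟩
  have hμ := surjective_productMap_of_isInversive δ hres H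
  exact ⟨(productMap δ includeRight).toRingHom.injective_of_surjective_of_isNoetherianRing hμ, hμ⟩

theorem sub_tmul_one_mem_map_ker (π : D →ₐ[F] F) {m : ℕ} (bD : Module.Basis (Fin (m + 1)) F D)
    (hb0 : π (bD 0) = 1) (hbi : ∀ i : Fin (m + 1), i ≠ 0 → π (bD i) = 0)
    (der : Fin m → K → K)
    (hδ : ∀ a : K, δ a = a ⊗ₜ[F] bD 0 + ∑ i : Fin m, (der i a) ⊗ₜ[F] bD i.succ) (a : K) :
    δ a - a ⊗ₜ[F] 1 ∈ (RingHom.ker π).map (includeRight : D →ₐ[F] K ⊗[F] D) := by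
  have hmem {d : D} (hd : π d = 0) (u : K) :
      u ⊗ₜ[F] d ∈ (RingHom.ker π).map (includeRight : D →ₐ[F] K ⊗[F] D) := by
    rw [show u ⊗ₜ[F] d = u ⊗ₜ[F] 1 * includeRight d by simp]
    exact Ideal.mul_mem_left _ _ (Ideal.mem_map_of_mem _ hd)
  rw [hδ, add_sub_right_comm, ← TensorProduct.tmul_sub]
  exact add_mem (hmem (by rw [map_sub, hb0, map_one, sub_self]) a)
    (sum_mem fun i _ ↦ hmem (hbi _ i.succ_ne_zero) _)

theorem isInversive_of_isLocalRing [FiniteDimensional F D] [IsLocalRing D]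
    (hres : ∀ I : Ideal D, I.IsMaximal → Function.Bijective (algebraMap F (D ⧸ I)))
    (π : D →ₐ[F] F) {m : ℕ} (bD : Module.Basis (Fin (m + 1)) F D)
    (hb0 : π (bD 0) = 1) (hbi : ∀ i : Fin (m + 1), i ≠ 0 → π (bD i) = 0)
    (der : Fin m → K → K)
    (hδ : ∀ a : K, δ a = a ⊗ₜ[F] bD 0 + ∑ i : Fin m, (der i a) ⊗ₜ[F] bD i.succ) :
    IsInversive δ := by
  have : IsArtinianRing D := isArtinian_of_tower F inferInstance
  intro J hJ x
  have : J.IsPrime := hJ.isPrime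
  have hker : RingHom.ker π = J.comap (includeRight : D →ₐ[F] K ⊗[F] D) :=
    (IsLocalRing.eq_maximalIdeal (RingHom.ker_isMaximal_of_surjective π
      fun c ↦ ⟨algebraMap F D c, π.commutes c⟩)).trans
    (IsLocalRing.eq_maximalIdeal (IsArtinianRing.isMaximal_of_isPrime _)).symm
  obtain ⟨r, rfl⟩ := Ideal.Quotient.mk_surjective x
  obtain ⟨a, ha⟩ := exists_sub_tmul_one_mem hres hJ r
  have hδa : δ a - a ⊗ₜ[F] 1 ∈ J :=
    Ideal.map_comap_le (hker ▸ sub_tmul_one_mem_map_ker δ π bD hb0 hbi der hδ a)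
  refine ⟨a, Ideal.Quotient.eq.mpr ?_⟩
  simpa using sub_mem hδa ha

end DField

theorem inversive_iff_delta_basis_general
    (F D K : Type*) [Field F] [CommRing D] [Algebra F D]
    [FiniteDimensional F D] [Field K] [Algebra F K]
    (π : D →ₐ[F] F) (m : ℕ) (bD : Module.Basis (Fin (m + 1)) F D)
    (hb0 : π (bD 0) = 1) (hbi : ∀ i : Fin (m + 1), i ≠ 0 → π (bD i) = 0)
    (hres : ∀ I : Ideal D, I.IsMaximal → Function.Bijective (algebraMap F (D ⧸ I)))
    (der : Fin m → K → K)
    (δ : K →ₐ[F] (K ⊗[F] D))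
    (hδ : ∀ a : K, δ a = a ⊗ₜ[F] bD 0 + ∑ i : Fin m, (der i a) ⊗ₜ[F] bD i.succ) :
    ((∀ J : Ideal (K ⊗[F] D), J.IsMaximal →
        Function.Surjective fun a : K => Ideal.Quotient.mk J (δ a)) ↔
      ∀ r : K ⊗[F] D, ∃! a : Fin (m + 1) → K,
        r = ∑ i : Fin (m + 1), δ (a i) * ((1 : K) ⊗ₜ[F] bD i)) ∧
    (IsLocalRing D →
      ∀ r : K ⊗[F] D, ∃! a : Fin (m + 1) → K,
        r = ∑ i : Fin (m + 1), δ (a i) * ((1 : K) ⊗ₜ[F] bD i)) := by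
  rw [existsUnique_sum_iff_bijective_productMap]
  exact ⟨(bijective_productMap_iff_isInversive δ hres).symm, fun _ ↦
    (bijective_productMap_iff_isInversive δ hres).mpr
      (isInversive_of_isLocalRing δ hres π bD hb0 hbi der hδ)⟩

/-- **Inversive 𝒟-fields and bases (Moosa–Scanlon setting).**

Let `F` be a field, `D` a nonzero finite-dimensional commutative `F`-algebra with an `F`-algebra
homomorphism `π : D → F`, and `e = (bD i)` an `F`-basis of `D` with `π (e 0) = 1` and
`π (e i) = 0` for `i ≠ 0`.  Assume (the Moosa–Scanlon assumption) that for every maximal ideal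
`I` of `D` the composite `F → D → D/I` is an isomorphism.  Let `K` be a field extension of `F`,
so that `𝒟_K = K ⊗[F] D`, and suppose `(K; ∂₁, …, ∂_m)` is a `𝒟`-field, i.e. the map
`δ : K → 𝒟_K`, `a ↦ a ⊗ e₀ + Σᵢ ∂ᵢ(a) ⊗ eᵢ`, is an `F`-algebra homomorphism.

Then the `𝒟`-field is inversive (for every maximal ideal `J` of `𝒟_K`, the composite of `δ`
with the residue map `𝒟_K → 𝒟_K/J` is surjective) if and only if `e` is a basis of `𝒟_K` as a
`K`-vector space with scalar multiplication through `δ`, i.e. every element of `𝒟_K` is uniquely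
of the form `Σᵢ δ(aᵢ) * (1 ⊗ eᵢ)`.  In particular, if `D` is a local `F`-algebra, then `e` is
such a basis. -/
theorem inversive_iff_delta_basis
    (F D K : Type*) [Field F] [CommRing D] [Nontrivial D] [Algebra F D]
    [FiniteDimensional F D] [Field K] [Algebra F K]
    (π : D →ₐ[F] F) (m : ℕ) (bD : Module.Basis (Fin (m + 1)) F D)
    (hb0 : π (bD 0) = 1) (hbi : ∀ i : Fin (m + 1), i ≠ 0 → π (bD i) = 0)
    (hres : ∀ I : Ideal D, I.IsMaximal → Function.Bijective (algebraMap F (D ⧸ I)))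
    (der : Fin m → K → K)
    (δ : K →ₐ[F] (K ⊗[F] D))
    (hδ : ∀ a : K, δ a = a ⊗ₜ[F] bD 0 + ∑ i : Fin m, (der i a) ⊗ₜ[F] bD i.succ) :
    ((∀ J : Ideal (K ⊗[F] D), J.IsMaximal →
        Function.Surjective fun a : K => Ideal.Quotient.mk J (δ a)) ↔
      ∀ r : K ⊗[F] D, ∃! a : Fin (m + 1) → K,
        r = ∑ i : Fin (m + 1), δ (a i) * ((1 : K) ⊗ₜ[F] bD i)) ∧
    (IsLocalRing D →
      ∀ r : K ⊗[F] D, ∃! a : Fin (m + 1) → K,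
        r = ∑ i : Fin (m + 1), δ (a i) * ((1 : K) ⊗ₜ[F] bD i)) :=
  inversive_iff_delta_basis_general F D K π m bD hb0 hbi hres der δ hδ
end
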